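/- arXiv:1312.5189 — 6 statements merged into one kernel-verified Lean document; each statement's English description precedes it below -/
import Mathlib

section
/- Let 1 < δ < 2. Let g : [0,1] → ℝ be continuously differentiable on [0,1], twice continuously differentiable on (0,1], and suppose there exist constants C > 0 and θ ∈ (0,1) such that |g''(x)| ≤ C x^{-θ} for all 0 < x ≤ 1. Suppose g attains its global minimum over [0,1] at a point x₀ ∈ (0,1). Then D*^δ g(x₀) ≥ (x₀^{-δ} / Γ(2-δ)) · ( (δ-1)·(g(0) - g(x₀)) - x₀ · g'(0) ). -/
/-!
Two integrations by parts give, for `F = caputoAntideriv δ x₀ g g'`,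
`∫₀^{x₀} (x₀ - t)^(1-δ) g'' = F x₀ - F 0 + δ (δ - 1) ∫₀^{x₀} (x₀ - t)^(-δ-1) (g t - g x₀) dt`,
and the last integral is nonnegative because `x₀` minimises `g`. The boundary term `F x₀`
vanishes: `g'(x₀) = 0` and `g''` is bounded near `x₀`, so `g' = O(x₀ - t)` and
`g - g x₀ = O((x₀ - t)²)`, which beat the singular weights since `δ < 2`. The weighted integral
of `g''` converges at `0` by the bound `|g''| ≤ C t^(-θ)` with `θ < 1`.
-/

open Set Filter Topology MeasureTheory

/-- The Caputo fractional derivative of order `δ ∈ (1,2)` of `g`, using derivatives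
within `[0,1]`:  `D*^δ g (x) = (1/Γ(2-δ)) ∫₀ˣ (x-t)^(1-δ) g''(t) dt`. -/
noncomputable def caputoW (δ : ℝ) (g : ℝ → ℝ) (x : ℝ) : ℝ :=
  (1 / Real.Gamma (2 - δ)) *
    ∫ t in (0:ℝ)..x, (x - t) ^ (1 - δ) *
      derivWithin (derivWithin g (Set.Icc 0 1)) (Set.Icc 0 1) t

section DerivWithin

variable {f : ℝ → ℝ} {s U : Set ℝ}

lemma contDiffOn_derivWithin_of_isOpen_subset {n : ℕ} (hU : IsOpen U) (hUs : U ⊆ s)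
    (hf : ContDiffOn ℝ (n + 1) f U) : ContDiffOn ℝ n (derivWithin f s) U :=
  (hf.deriv_of_isOpen hU le_rfl).congr fun _ ht =>
    derivWithin_of_mem_nhds (mem_of_superset (hU.mem_nhds ht) hUs)

lemma hasDerivAt_derivWithin_of_isOpen_subset {t : ℝ} (hU : IsOpen U) (hUs : U ⊆ s)
    (hf : ContDiffOn ℝ 1 f U) (ht : t ∈ U) : HasDerivAt f (derivWithin f s t) t := by
  rw [derivWithin_of_mem_nhds (mem_of_superset (hU.mem_nhds ht) hUs)]
  exact ((hf.differentiableOn one_ne_zero).differentiableAt (hU.mem_nhds ht)).hasDerivAt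

end DerivWithin

section TaylorBounds

variable {f f' f'' : ℝ → ℝ} {a b M t : ℝ}

lemma abs_sub_le_mul_of_abs_deriv_le (hf : ∀ u ∈ Icc a b, HasDerivAt f (f' u) u)
    (hM : ∀ u ∈ Icc a b, |f' u| ≤ M) (ht : t ∈ Icc a b) : |f t - f b| ≤ M * (b - t) := by
  have h := (convex_Icc a b).norm_image_sub_le_of_norm_hasDerivWithin_le
    (fun u hu => (hf u hu).hasDerivWithinAt) hM (right_mem_Icc.2 (ht.1.trans ht.2)) ht
  rwa [Real.norm_eq_abs, Real.norm_eq_abs, abs_of_nonpos (sub_nonpos.2 ht.2), neg_sub] at h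

lemma abs_sub_le_mul_sq_of_deriv_eq_zero (hf : ∀ u ∈ Icc a b, HasDerivAt f (f' u) u)
    (hf' : ∀ u ∈ Icc a b, HasDerivAt f' (f'' u) u) (hM : ∀ u ∈ Icc a b, |f'' u| ≤ M)
    (hb : f' b = 0) (ht : t ∈ Icc a b) : |f t - f b| ≤ M * (b - t) ^ 2 := by
  have hsub : Icc t b ⊆ Icc a b := Icc_subset_Icc_left ht.1
  have hM0 : 0 ≤ M := (abs_nonneg _).trans (hM t ht)
  have hf'_le : ∀ u ∈ Icc t b, |f' u| ≤ M * (b - t) := fun u hu => by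
    have h := abs_sub_le_mul_of_abs_deriv_le hf' hM (hsub hu)
    rw [hb, sub_zero] at h
    exact h.trans (mul_le_mul_of_nonneg_left (by linarith [hu.1]) hM0)
  have h := abs_sub_le_mul_of_abs_deriv_le (fun u hu => hf u (hsub hu)) hf'_le
    (left_mem_Icc.2 ht.2)
  linarith

end TaylorBounds

lemma tendsto_rpow_sub_mul_nhdsLT {φ : ℝ → ℝ} {x₀ p M : ℝ} {k : ℕ} (hk : 0 < p + k)
    (h : ∀ᶠ t in 𝓝[<] x₀, |φ t| ≤ M * (x₀ - t) ^ k) :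
    Tendsto (fun t => (x₀ - t) ^ p * φ t) (𝓝[<] x₀) (𝓝 0) := by
  have hlim : Tendsto (fun t => M * (x₀ - t) ^ (p + k)) (𝓝[<] x₀) (𝓝 0) := by
    have hc : ContinuousAt (fun t => M * (x₀ - t) ^ (p + k)) x₀ :=
      continuousAt_const.mul ((continuousAt_const.sub continuousAt_id).rpow_const (Or.inr hk.le))
    simpa [Real.zero_rpow hk.ne'] using hc.tendsto.mono_left nhdsWithin_le_nhds
  refine squeeze_zero_norm' ?_ hlim
  filter_upwards [h, self_mem_nhdsWithin] with t ht htx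
  have hpos : 0 < x₀ - t := sub_pos.2 htx
  rw [Real.rpow_add_natCast hpos.ne', norm_mul, Real.norm_of_nonneg (Real.rpow_nonneg hpos.le _)]
  calc (x₀ - t) ^ p * ‖φ t‖ ≤ (x₀ - t) ^ p * (M * (x₀ - t) ^ k) :=
        mul_le_mul_of_nonneg_left ht (Real.rpow_nonneg hpos.le _)
    _ = M * ((x₀ - t) ^ p * (x₀ - t) ^ k) := by ring

lemma intervalIntegrable_of_abs_le_rpow {φ : ℝ → ℝ} {b C θ : ℝ} (hb : 0 ≤ b)
    (hθ : θ < 1) (hφ : ContinuousOn φ (Ioc 0 b)) (hbound : ∀ t ∈ Ioc 0 b, |φ t| ≤ C * t ^ (-θ)) :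
    IntervalIntegrable φ volume 0 b := by
  refine ((intervalIntegral.intervalIntegrable_rpow' (r := -θ) (by linarith)).const_mul
    C).mono_fun' ?_ ?_
  · rw [uIoc_of_le hb]
    exact hφ.aestronglyMeasurable measurableSet_Ioc
  · rw [uIoc_of_le hb]
    filter_upwards [ae_restrict_mem measurableSet_Ioc] with t ht using hbound t ht

lemma intervalIntegrable_rpow_sub_mul {φ : ℝ → ℝ} {x₀ r : ℝ} (hx₀ : 0 < x₀)
    (hr : -1 < r) (hφ : IntervalIntegrable φ volume 0 x₀) (hφc : ContinuousOn φ (Ioc 0 x₀)) :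
    IntervalIntegrable (fun t => (x₀ - t) ^ r * φ t) volume 0 x₀ := by
  have hpow : IntervalIntegrable (fun t => (x₀ - t) ^ r) volume 0 x₀ := by
    simpa using
      ((intervalIntegral.intervalIntegrable_rpow' hr (a := 0) (b := x₀)).comp_sub_left x₀).symm
  have ha₀ : 0 < x₀ / 2 := half_pos hx₀
  have hax : x₀ / 2 < x₀ := half_lt_self hx₀
  refine IntervalIntegrable.trans (b := x₀ / 2) ?_ ?_
  · refine (hφ.mono_set ?_).continuousOn_mul fun t ht => ?_
    · rw [uIcc_of_le ha₀.le, uIcc_of_le hx₀.le]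
      exact Icc_subset_Icc_right hax.le
    · rw [uIcc_of_le ha₀.le] at ht
      exact ((continuousAt_const.sub continuousAt_id).rpow_const
        (Or.inl (sub_pos.2 (by linarith [ht.2] : t < x₀)).ne')).continuousWithinAt
  · refine (hpow.mono_set ?_).mul_continuousOn (hφc.mono ?_)
    · rw [uIcc_of_le hax.le, uIcc_of_le hx₀.le]
      exact Icc_subset_Icc_left ha₀.le
    · rw [uIcc_of_le hax.le]
      exact fun t ht => ⟨ha₀.trans_le ht.1, ht.2⟩

noncomputable def caputoAntideriv (δ x₀ : ℝ) (g g' : ℝ → ℝ) (t : ℝ) : ℝ :=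
  (x₀ - t) ^ (1 - δ) * g' t - (δ - 1) * ((x₀ - t) ^ (-δ) * (g t - g x₀))

section CaputoAntideriv

variable {δ x₀ : ℝ} {g g' g'' : ℝ → ℝ}

lemma hasDerivAt_caputoAntideriv {t : ℝ} (ht : t < x₀) (hg : HasDerivAt g (g' t) t)
    (hg' : HasDerivAt g' (g'' t) t) :
    HasDerivAt (caputoAntideriv δ x₀ g g') ((x₀ - t) ^ (1 - δ) * g'' t
      - δ * (δ - 1) * ((x₀ - t) ^ (-δ - 1) * (g t - g x₀))) t := by
  have hpos : x₀ - t ≠ 0 := (sub_pos.2 ht).ne'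
  have hsub : HasDerivAt (fun s => x₀ - s) (-1) t := (hasDerivAt_id t).const_sub x₀
  have h₁ := (hsub.rpow_const (p := 1 - δ) (Or.inl hpos)).mul hg'
  have h₂ :=
    ((hsub.rpow_const (p := -δ) (Or.inl hpos)).mul (hg.sub_const (g x₀))).const_mul (δ - 1)
  rw [show 1 - δ - 1 = -δ by ring] at h₁
  exact (h₁.sub h₂).congr_deriv (by ring)

lemma caputoAntideriv_self (hcrit : g' x₀ = 0) : caputoAntideriv δ x₀ g g' x₀ = 0 := by
  simp [caputoAntideriv, hcrit]

lemma caputoAntideriv_self_sub_zero (hx₀ : 0 < x₀) (hcrit : g' x₀ = 0) :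
    caputoAntideriv δ x₀ g g' x₀ - caputoAntideriv δ x₀ g g' 0
      = x₀ ^ (-δ) * ((δ - 1) * (g 0 - g x₀) - x₀ * g' 0) := by
  have hpow : x₀ ^ (1 - δ) = x₀ ^ (-δ) * x₀ := by
    rw [sub_eq_neg_add, Real.rpow_add hx₀, Real.rpow_one]
  rw [caputoAntideriv_self hcrit]
  simp only [caputoAntideriv, sub_zero, hpow]
  ring

lemma tendsto_caputoAntideriv_nhdsLT {a : ℝ} (hδ : δ < 2) (ha : a < x₀)
    (hg : ∀ t ∈ Icc a x₀, HasDerivAt g (g' t) t)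
    (hg' : ∀ t ∈ Icc a x₀, HasDerivAt g' (g'' t) t)
    (hg'' : ContinuousOn g'' (Icc a x₀)) (hcrit : g' x₀ = 0) :
    Tendsto (caputoAntideriv δ x₀ g g') (𝓝[<] x₀) (𝓝 0) := by
  obtain ⟨M, hM⟩ := isCompact_Icc.exists_bound_of_continuousOn hg''
  simp only [Real.norm_eq_abs] at hM
  have hnear : ∀ᶠ t in 𝓝[<] x₀, t ∈ Icc a x₀ :=
    mem_of_superset (Ioo_mem_nhdsLT ha) Ioo_subset_Icc_self
  have h₁ : Tendsto (fun t => (x₀ - t) ^ (1 - δ) * g' t) (𝓝[<] x₀) (𝓝 0) :=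
    tendsto_rpow_sub_mul_nhdsLT (k := 1) (by push_cast; linarith) <| hnear.mono fun t ht => by
      simpa [hcrit] using abs_sub_le_mul_of_abs_deriv_le hg' hM ht
  have h₂ : Tendsto (fun t => (x₀ - t) ^ (-δ) * (g t - g x₀)) (𝓝[<] x₀) (𝓝 0) :=
    tendsto_rpow_sub_mul_nhdsLT (k := 2) (by push_cast; linarith) <| hnear.mono fun t ht =>
      abs_sub_le_mul_sq_of_deriv_eq_zero hg hg' hM hcrit ht
  have h := h₁.sub (h₂.const_mul (δ - 1))
  rwa [mul_zero, sub_zero] at h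

lemma continuousWithinAt_caputoAntideriv {s : Set ℝ} {t : ℝ} (ht : t < x₀)
    (hg : ContinuousOn g s) (hg' : ContinuousOn g' s) (hts : t ∈ s) :
    ContinuousWithinAt (caputoAntideriv δ x₀ g g') s t := by
  have hpow : ∀ p : ℝ, ContinuousWithinAt (fun u => (x₀ - u) ^ p) s t := fun p =>
    ((continuousAt_const.sub continuousAt_id).rpow_const
      (Or.inl (sub_pos.2 ht).ne')).continuousWithinAt
  exact ((hpow _).mul (hg' t hts)).sub
    (continuousWithinAt_const.mul ((hpow _).mul ((hg t hts).sub continuousWithinAt_const)))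

lemma continuousOn_caputoAntideriv (hg : ContinuousOn g (Icc 0 x₀))
    (hg' : ContinuousOn g' (Icc 0 x₀)) (hcrit : g' x₀ = 0)
    (hlim : Tendsto (caputoAntideriv δ x₀ g g') (𝓝[<] x₀) (𝓝 0)) :
    ContinuousOn (caputoAntideriv δ x₀ g g') (Icc 0 x₀) := by
  intro t ht
  rcases ht.2.lt_or_eq with htx | rfl
  · exact continuousWithinAt_caputoAntideriv htx hg hg' ht
  · rw [← caputoAntideriv_self hcrit] at hlim
    exact (continuousWithinAt_Iio_iff_Iic.1 hlim).mono Icc_subset_Iic_self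

lemma caputoAntideriv_sub_le_integral (hδ : 1 < δ) (hx₀ : 0 < x₀)
    (hF : ContinuousOn (caputoAntideriv δ x₀ g g') (Icc 0 x₀))
    (hg : ∀ t ∈ Ioo 0 x₀, HasDerivAt g (g' t) t)
    (hg' : ∀ t ∈ Ioo 0 x₀, HasDerivAt g' (g'' t) t)
    (hint : IntervalIntegrable (fun t => (x₀ - t) ^ (1 - δ) * g'' t) volume 0 x₀)
    (hmin : IsMinOn g (Icc 0 x₀) x₀) :
    caputoAntideriv δ x₀ g g' x₀ - caputoAntideriv δ x₀ g g' 0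
      ≤ ∫ t in (0:ℝ)..x₀, (x₀ - t) ^ (1 - δ) * g'' t :=
  intervalIntegral.sub_le_integral_of_hasDeriv_right_of_le hx₀.le hF
    (fun t ht => (hasDerivAt_caputoAntideriv ht.2 (hg t ht) (hg' t ht)).hasDerivWithinAt)
    ((intervalIntegrable_iff_integrableOn_Icc_of_le hx₀.le).1 hint)
    fun t ht => sub_le_self _ <| mul_nonneg (mul_nonneg (by linarith) (by linarith)) <|
      mul_nonneg (Real.rpow_nonneg (sub_pos.2 ht.2).le _)
        (sub_nonneg.2 (hmin (Ioo_subset_Icc_self ht)))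

theorem le_integral_rpow_sub_mul_of_isMinOn {C θ : ℝ} (hδ1 : 1 < δ) (hδ2 : δ < 2)
    (hθ : θ < 1) (hx₀ : 0 < x₀) (hg : ContinuousOn g (Icc 0 x₀))
    (hg' : ContinuousOn g' (Icc 0 x₀))
    (hd : ∀ t ∈ Ioc 0 x₀, HasDerivAt g (g' t) t)
    (hd' : ∀ t ∈ Ioc 0 x₀, HasDerivAt g' (g'' t) t) (hg'' : ContinuousOn g'' (Ioc 0 x₀))
    (hbound : ∀ t ∈ Ioc 0 x₀, |g'' t| ≤ C * t ^ (-θ))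
    (hmin : IsMinOn g (Icc 0 x₀) x₀) (hcrit : g' x₀ = 0) :
    x₀ ^ (-δ) * ((δ - 1) * (g 0 - g x₀) - x₀ * g' 0)
      ≤ ∫ t in (0:ℝ)..x₀, (x₀ - t) ^ (1 - δ) * g'' t := by
  have hnear : Icc (x₀ / 2) x₀ ⊆ Ioc 0 x₀ := fun t ht => ⟨(half_pos hx₀).trans_le ht.1, ht.2⟩
  have hF : ContinuousOn (caputoAntideriv δ x₀ g g') (Icc 0 x₀) :=
    continuousOn_caputoAntideriv hg hg' hcrit <|
      tendsto_caputoAntideriv_nhdsLT hδ2 (half_lt_self hx₀) (fun t ht => hd t (hnear ht))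
        (fun t ht => hd' t (hnear ht)) (hg''.mono hnear) hcrit
  have hint : IntervalIntegrable (fun t => (x₀ - t) ^ (1 - δ) * g'' t) volume 0 x₀ :=
    intervalIntegrable_rpow_sub_mul hx₀ (by linarith)
      (intervalIntegrable_of_abs_le_rpow hx₀.le hθ hg'' hbound) hg''
  rw [← caputoAntideriv_self_sub_zero hx₀ hcrit]
  exact caputoAntideriv_sub_le_integral hδ1 hx₀ hF (fun t ht => hd t (Ioo_subset_Ioc_self ht))
    (fun t ht => hd' t (Ioo_subset_Ioc_self ht)) hint hmin

end CaputoAntideriv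

theorem stmt0_general (δ : ℝ) (hδ1 : 1 < δ) (hδ2 : δ < 2) (g : ℝ → ℝ)
    (hg1 : ContDiffOn ℝ 1 g (Set.Icc 0 1)) (hg2 : ContDiffOn ℝ 2 g (Set.Ioc 0 1))
    (C θ : ℝ) (hθ2 : θ < 1)
    (hbound : ∀ x ∈ Set.Ioc (0:ℝ) 1,
      |derivWithin (derivWithin g (Set.Icc 0 1)) (Set.Icc 0 1) x| ≤ C * x ^ (-θ))
    (x₀ : ℝ) (hx₀ : x₀ ∈ Set.Ioo (0:ℝ) 1)
    (hmin : ∀ x ∈ Set.Icc (0:ℝ) 1, g x₀ ≤ g x) :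
    caputoW δ g x₀ ≥ (x₀ ^ (-δ) / Real.Gamma (2 - δ)) *
      ((δ - 1) * (g 0 - g x₀) - x₀ * derivWithin g (Set.Icc 0 1) 0) := by
  obtain ⟨hx0, hx1⟩ := hx₀
  replace hmin : IsMinOn g (Icc 0 1) x₀ := isMinOn_iff.2 hmin
  set g' := derivWithin g (Icc 0 1)
  have hg2' : ContDiffOn ℝ 2 g (Ioo 0 1) := hg2.mono Ioo_subset_Ioc_self
  have hg'C1 : ContDiffOn ℝ 1 g' (Ioo 0 1) :=
    contDiffOn_derivWithin_of_isOpen_subset isOpen_Ioo Ioo_subset_Icc_self hg2'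
  have hd : ∀ t ∈ Ioo (0:ℝ) 1, HasDerivAt g (g' t) t := fun _ =>
    hasDerivAt_derivWithin_of_isOpen_subset isOpen_Ioo Ioo_subset_Icc_self (hg2'.of_le one_le_two)
  have hd' : ∀ t ∈ Ioo (0:ℝ) 1, HasDerivAt g' (derivWithin g' (Icc 0 1) t) t := fun _ =>
    hasDerivAt_derivWithin_of_isOpen_subset isOpen_Ioo Ioo_subset_Icc_self hg'C1
  have hg''_cont : ContinuousOn (derivWithin g' (Icc 0 1)) (Ioo 0 1) :=
    (contDiffOn_derivWithin_of_isOpen_subset (n := 0) isOpen_Ioo Ioo_subset_Icc_self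
      hg'C1).continuousOn
  have hIcc : Icc 0 x₀ ⊆ Icc 0 1 := Icc_subset_Icc_right hx1.le
  have hIoc : Ioc 0 x₀ ⊆ Ioo 0 1 := fun t ht => ⟨ht.1, ht.2.trans_lt hx1⟩
  have hcrit : g' x₀ = 0 :=
    (hmin.isLocalMin (Icc_mem_nhds hx0 hx1)).hasDerivAt_eq_zero (hd x₀ ⟨hx0, hx1⟩)
  have key := le_integral_rpow_sub_mul_of_isMinOn hδ1 hδ2 hθ2 hx0 (hg1.continuousOn.mono hIcc)
    ((hg1.continuousOn_derivWithin (uniqueDiffOn_Icc one_pos) le_rfl).mono hIcc)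
    (fun t ht => hd t (hIoc ht)) (fun t ht => hd' t (hIoc ht)) (hg''_cont.mono hIoc)
    (fun t ht => hbound t ⟨ht.1, ht.2.trans hx1.le⟩) (hmin.on_subset hIcc) hcrit
  have hΓ : 0 < Real.Gamma (2 - δ) := Real.Gamma_pos_of_pos (by linarith)
  calc (x₀ ^ (-δ) / Real.Gamma (2 - δ)) * ((δ - 1) * (g 0 - g x₀) - x₀ * g' 0)
      = 1 / Real.Gamma (2 - δ) * (x₀ ^ (-δ) * ((δ - 1) * (g 0 - g x₀) - x₀ * g' 0)) := by
        ring
    _ ≤ caputoW δ g x₀ := mul_le_mul_of_nonneg_left key (by positivity)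

theorem stmt0 (δ : ℝ) (hδ1 : 1 < δ) (hδ2 : δ < 2) (g : ℝ → ℝ)
    (hg1 : ContDiffOn ℝ 1 g (Set.Icc 0 1)) (hg2 : ContDiffOn ℝ 2 g (Set.Ioc 0 1))
    (C θ : ℝ) (hC : 0 < C) (hθ1 : 0 < θ) (hθ2 : θ < 1)
    (hbound : ∀ x ∈ Set.Ioc (0:ℝ) 1,
      |derivWithin (derivWithin g (Set.Icc 0 1)) (Set.Icc 0 1) x| ≤ C * x ^ (-θ))
    (x₀ : ℝ) (hx₀ : x₀ ∈ Set.Ioo (0:ℝ) 1)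
    (hmin : ∀ x ∈ Set.Icc (0:ℝ) 1, g x₀ ≤ g x) :
    caputoW δ g x₀ ≥ (x₀ ^ (-δ) / Real.Gamma (2 - δ)) *
      ((δ - 1) * (g 0 - g x₀) - x₀ * derivWithin g (Set.Icc 0 1) 0) :=
  stmt0_general δ hδ1 hδ2 g hg1 hg2 C θ hθ2 hbound x₀ hx₀ hmin
end

section
/- Let θ₁, θ₂ ∈ (0,1) and let r : (0,1] → ℝ be continuous with |r(s)| ≤ C s^{-θ₂} for all 0 < s ≤ 1 and some constant C. Then the function F(x) = ∫₀ˣ (x-s)^{θ₁} r(s) ds is differentiable at every x ∈ (0,1), with F'(x) = ∫₀ˣ θ₁ (x-s)^{θ₁−1} r(s) ds. -/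
/-!
Writing `g t = ∫ s in 0..t, θ₁ * (t - s) ^ (θ₁ - 1) * r s`, Fubini and
`∫ t in s..y, θ₁ * (t - s) ^ (θ₁ - 1) = (y - s) ^ θ₁` give `F y = ∫ t in 0..y, g t`, so by the
fundamental theorem of calculus it suffices that `g` is continuous on `(0, 1)`. The substitution
`s = t * u` turns `g t` into `θ₁ * t ^ θ₁ * ∫ u in 0..1, (1 - u) ^ (θ₁ - 1) * r (t * u)`, whose
integrand is dominated, for `t` near `t₀ > 0`, by the Beta-type function
`C * (t₀ / 2) ^ (-θ₂) * (1 - u) ^ (θ₁ - 1) * u ^ (-θ₂)`.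
-/

open MeasureTheory Set

lemma integral_mul_sub_rpow_sub_one {θ : ℝ} (hθ : 0 < θ) (s b : ℝ) :
    ∫ t in s..b, θ * (t - s) ^ (θ - 1) = (b - s) ^ θ := by
  rw [intervalIntegral.integral_const_mul,
    intervalIntegral.integral_comp_sub_right (fun u => u ^ (θ - 1)) s,
    integral_rpow (Or.inl (by linarith)), sub_self, sub_add_cancel, Real.zero_rpow hθ.ne']
  field_simp
  simp

lemma intervalIntegrable_mul_sub_rpow_sub_one {θ : ℝ} (hθ : 0 < θ) (s b : ℝ) :
    IntervalIntegrable (fun t => θ * (t - s) ^ (θ - 1)) volume s b := by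
  have h := (intervalIntegral.intervalIntegrable_rpow' (a := 0) (b := b - s)
    (show (-1 : ℝ) < θ - 1 by linarith)).comp_sub_right s
  rw [zero_add, sub_add_cancel] at h
  exact h.const_mul θ

/-- The cut-off at the diagonal is explicit because `Real.rpow` does not vanish at negative bases. -/
noncomputable def volterraIntegrand (θ : ℝ) (f : ℝ → ℝ) (s t : ℝ) : ℝ :=
  if s < t then θ * (t - s) ^ (θ - 1) * f s else 0

namespace volterraIntegrand

variable {θ a b : ℝ} {f : ℝ → ℝ}

lemma eq_indicator_Ioi (s : ℝ) :
    volterraIntegrand θ f s = (Ioi s).indicator fun t => θ * (t - s) ^ (θ - 1) * f s := by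
  ext t; simp [volterraIntegrand, indicator_apply]

lemma eq_indicator_Iio (t : ℝ) :
    (volterraIntegrand θ f · t) = (Iio t).indicator fun s => θ * (t - s) ^ (θ - 1) * f s := by
  ext s; simp [volterraIntegrand, indicator_apply]

lemma norm_apply (hθ : 0 < θ) (s t : ℝ) :
    ‖volterraIntegrand θ f s t‖ = volterraIntegrand θ (fun s => |f s|) s t := by
  unfold volterraIntegrand
  split_ifs with hst
  · rw [Real.norm_eq_abs, abs_mul, abs_mul, abs_of_pos hθ,
      abs_of_nonneg (Real.rpow_nonneg (sub_nonneg.2 hst.le) _)]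
  · simp

lemma integrableOn_Ioc (hθ : 0 < θ) {s : ℝ} :
    IntegrableOn (volterraIntegrand θ f s) (Ioc a b) := by
  rw [eq_indicator_Ioi, integrableOn_indicator_iff measurableSet_Ioi]
  refine IntegrableOn.mono_set ?_ (fun t ht => ⟨ht.1, ht.2.2⟩ : Ioi s ∩ Ioc a b ⊆ Ioc s b)
  exact (intervalIntegrable_mul_sub_rpow_sub_one hθ s b).1.mul_const (f s)

lemma setIntegral_Ioc {s : ℝ} (hθ : 0 < θ) (hs : s ∈ Ioc a b) :
    ∫ t in Ioc a b, volterraIntegrand θ f s t = (b - s) ^ θ * f s := by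
  rw [eq_indicator_Ioi, setIntegral_indicator measurableSet_Ioi, Ioc_inter_Ioi,
    max_eq_right hs.1.le, integral_mul_const, ← intervalIntegral.integral_of_le hs.2,
    integral_mul_sub_rpow_sub_one hθ]

lemma setIntegral_Ioc_left {t : ℝ} (ht : t ∈ Ioc a b) :
    ∫ s in Ioc a b, volterraIntegrand θ f s t = ∫ s in a..t, θ * (t - s) ^ (θ - 1) * f s := by
  have hIoo : Ioc a b ∩ Iio t = Ioo a t := by
    ext s
    simp only [mem_inter_iff, mem_Ioc, mem_Iio, mem_Ioo]
    exact ⟨fun h => ⟨h.1.1, h.2⟩, fun h => ⟨⟨h.1, h.2.le.trans ht.2⟩, h.2⟩⟩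
  rw [eq_indicator_Iio, setIntegral_indicator measurableSet_Iio, hIoo,
    ← integral_Ioc_eq_integral_Ioo, intervalIntegral.integral_of_le ht.1.le]

lemma integrable_prod (hθ : 0 < θ) (hf : IntervalIntegrable f volume a b) :
    Integrable (fun p : ℝ × ℝ => volterraIntegrand θ f p.1 p.2)
      ((volume.restrict (Ioc a b)).prod (volume.restrict (Ioc a b))) := by
  have hmeas : AEStronglyMeasurable (fun p : ℝ × ℝ => volterraIntegrand θ f p.1 p.2)
      ((volume.restrict (Ioc a b)).prod (volume.restrict (Ioc a b))) := by
    have hind : (fun p : ℝ × ℝ => volterraIntegrand θ f p.1 p.2) =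
        {p | p.1 < p.2}.indicator fun p => θ * (p.2 - p.1) ^ (θ - 1) * f p.1 := by
      ext p; simp [volterraIntegrand, indicator_apply]
    rw [hind]
    refine AEStronglyMeasurable.indicator ?_ (measurableSet_lt measurable_fst measurable_snd)
    exact (measurable_const.mul ((measurable_snd.sub measurable_fst).pow_const _)
      ).aestronglyMeasurable.mul hf.1.aestronglyMeasurable.comp_fst
  refine (integrable_prod_iff hmeas).2
    ⟨Filter.Eventually.of_forall fun s => integrableOn_Ioc hθ, ?_⟩
  have hdom : IntervalIntegrable (fun s => (b - s) ^ θ * |f s|) volume a b :=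
    hf.abs.continuousOn_mul
      ((Real.continuous_rpow_const hθ.le).comp (continuous_const.sub continuous_id)).continuousOn
  refine hdom.1.congr ?_
  filter_upwards [ae_restrict_mem measurableSet_Ioc] with s hs
  simp only [norm_apply hθ]
  exact (setIntegral_Ioc (f := fun s => |f s|) hθ hs).symm

end volterraIntegrand

section

variable {θ a b : ℝ} {f : ℝ → ℝ}

lemma intervalIntegrable_integral_mul_sub_rpow_mul (hθ : 0 < θ) (hab : a ≤ b)
    (hf : IntervalIntegrable f volume a b) :
    IntervalIntegrable (fun t => ∫ s in a..t, θ * (t - s) ^ (θ - 1) * f s) volume a b := by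
  rw [intervalIntegrable_iff_integrableOn_Ioc_of_le hab]
  refine (volterraIntegrand.integrable_prod hθ hf).integral_prod_right.congr ?_
  filter_upwards [ae_restrict_mem measurableSet_Ioc] with t ht
  exact volterraIntegrand.setIntegral_Ioc_left ht

theorem integral_sub_rpow_mul_eq_integral_integral (hθ : 0 < θ) (hab : a ≤ b)
    (hf : IntervalIntegrable f volume a b) :
    ∫ s in a..b, (b - s) ^ θ * f s = ∫ t in a..b, ∫ s in a..t, θ * (t - s) ^ (θ - 1) * f s := by
  rw [intervalIntegral.integral_of_le hab, intervalIntegral.integral_of_le hab]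
  calc ∫ s in Ioc a b, (b - s) ^ θ * f s
      = ∫ s in Ioc a b, ∫ t in Ioc a b, volterraIntegrand θ f s t :=
        setIntegral_congr_fun measurableSet_Ioc fun s hs =>
          (volterraIntegrand.setIntegral_Ioc hθ hs).symm
    _ = ∫ t in Ioc a b, ∫ s in Ioc a b, volterraIntegrand θ f s t :=
        integral_integral_swap (volterraIntegrand.integrable_prod hθ hf)
    _ = ∫ t in Ioc a b, ∫ s in a..t, θ * (t - s) ^ (θ - 1) * f s :=
        setIntegral_congr_fun measurableSet_Ioc fun t ht =>
          volterraIntegrand.setIntegral_Ioc_left ht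

end

lemma integral_sub_rpow_mul_eq_rpow_mul_integral {t : ℝ} (ht : 0 < t) (a : ℝ) (φ : ℝ → ℝ) :
    ∫ s in 0..t, (t - s) ^ a * φ s = t ^ (a + 1) * ∫ u in 0..1, (1 - u) ^ a * φ (t * u) := by
  have hscale := intervalIntegral.smul_integral_comp_mul_left
    (f := fun s : ℝ => (t - s) ^ a * φ s) (a := 0) (b := 1) t
  rw [mul_zero, mul_one, smul_eq_mul] at hscale
  rw [← hscale, Real.rpow_add_one ht.ne', mul_comm (t ^ a), mul_assoc,
    ← intervalIntegral.integral_const_mul (t ^ a)]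
  congr 1
  refine intervalIntegral.integral_congr fun u hu => ?_
  rw [uIcc_of_le zero_le_one] at hu
  rw [← mul_one_sub, Real.mul_rpow ht.le (sub_nonneg.2 hu.2), mul_assoc]

lemma intervalIntegrable_one_sub_rpow_mul_rpow {a b : ℝ} (ha : -1 < a) (hb : -1 < b) :
    IntervalIntegrable (fun u : ℝ => (1 - u) ^ a * u ^ b) volume 0 1 := by
  have hβ := (Complex.betaIntegral_convergent (u := b + 1) (v := a + 1)
    (by simp; linarith) (by simp; linarith)).norm
  refine hβ.congr_uIoo fun u hu => ?_
  rw [uIoo_of_le zero_le_one] at hu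
  have h1u : (1 : ℂ) - u = ((1 - u : ℝ) : ℂ) := by push_cast; ring
  simp only [norm_mul, h1u, Complex.norm_cpow_eq_rpow_re_of_pos hu.1,
    Complex.norm_cpow_eq_rpow_re_of_pos (sub_pos.2 hu.2)]
  norm_num [mul_comm]

section WeightedBound

variable {β C : ℝ} {r : ℝ → ℝ}

lemma nonneg_of_abs_le_mul_rpow (hbound : ∀ s ∈ Ioc (0 : ℝ) 1, |r s| ≤ C * s ^ (-β)) : 0 ≤ C := by
  simpa using (abs_nonneg _).trans (hbound 1 ⟨one_pos, le_rfl⟩)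

lemma integrableOn_of_abs_le_mul_rpow (hβ : β < 1) (hr : ContinuousOn r (Ioc 0 1))
    (hbound : ∀ s ∈ Ioc (0 : ℝ) 1, |r s| ≤ C * s ^ (-β)) : IntegrableOn r (Ioc 0 1) := by
  have hdom := (intervalIntegral.intervalIntegrable_rpow' (a := 0) (b := 1)
    (show (-1 : ℝ) < -β by linarith)).const_mul C
  refine hdom.1.mono' (hr.aestronglyMeasurable measurableSet_Ioc) ?_
  filter_upwards [ae_restrict_mem measurableSet_Ioc] with s hs using hbound s hs

lemma continuousAt_integral_one_sub_rpow_mul_comp_mul {a t₀ : ℝ} (ha : -1 < a) (hβ₀ : 0 ≤ β)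
    (hβ₁ : β < 1) (hr : ContinuousOn r (Ioc 0 1))
    (hbound : ∀ s ∈ Ioc (0 : ℝ) 1, |r s| ≤ C * s ^ (-β)) (ht₀ : t₀ ∈ Ioo 0 1) :
    ContinuousAt (fun t => ∫ u in 0..1, (1 - u) ^ a * r (t * u)) t₀ := by
  have hmem {t u : ℝ} (ht : t ∈ Ioo 0 1) (hu : u ∈ Ioc 0 1) : t * u ∈ Ioo 0 1 :=
    ⟨mul_pos ht.1 hu.1, (mul_le_of_le_one_right ht.1.le hu.2).trans_lt ht.2⟩
  have hr_at {s : ℝ} (hs : s ∈ Ioo 0 1) : ContinuousAt r s :=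
    hr.continuousAt (Ioc_mem_nhds hs.1 hs.2)
  apply intervalIntegral.continuousAt_of_dominated_interval
    (bound := fun u => C * (t₀ / 2) ^ (-β) * ((1 - u) ^ a * u ^ (-β)))
  · filter_upwards [Ioo_mem_nhds ht₀.1 ht₀.2] with t ht
    rw [uIoc_of_le zero_le_one, ← restrict_Ioo_eq_restrict_Ioc]
    refine ContinuousOn.aestronglyMeasurable (fun u hu => ContinuousAt.continuousWithinAt ?_)
      measurableSet_Ioo
    exact (Real.continuousAt_rpow_const _ _ (Or.inl (sub_pos.2 hu.2).ne')).comp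
      (continuousAt_const.sub continuousAt_id) |>.mul
      ((hr_at (hmem ht (Ioo_subset_Ioc_self hu))).comp (f := fun u => t * u)
        (continuousAt_const.mul continuousAt_id))
  · filter_upwards [Ioo_mem_nhds (half_lt_self ht₀.1) ht₀.2] with t ht
    refine Filter.Eventually.of_forall fun u hu => ?_
    rw [uIoc_of_le zero_le_one] at hu
    have ht' : t ∈ Ioo 0 1 := ⟨(half_pos ht₀.1).trans ht.1, ht.2⟩
    have h1u : 0 ≤ (1 - u) ^ a := Real.rpow_nonneg (sub_nonneg.2 hu.2) _
    calc ‖(1 - u) ^ a * r (t * u)‖ = (1 - u) ^ a * |r (t * u)| := by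
          rw [Real.norm_eq_abs, abs_mul, abs_of_nonneg h1u]
      _ ≤ (1 - u) ^ a * (C * (t * u) ^ (-β)) :=
          mul_le_mul_of_nonneg_left (hbound _ (Ioo_subset_Ioc_self (hmem ht' hu))) h1u
      _ = C * t ^ (-β) * ((1 - u) ^ a * u ^ (-β)) := by
          rw [Real.mul_rpow ht'.1.le hu.1.le]; ring
      _ ≤ C * (t₀ / 2) ^ (-β) * ((1 - u) ^ a * u ^ (-β)) := by
          refine mul_le_mul_of_nonneg_right (mul_le_mul_of_nonneg_left ?_
            (nonneg_of_abs_le_mul_rpow hbound)) (mul_nonneg h1u (Real.rpow_nonneg hu.1.le _))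
          exact Real.rpow_le_rpow_of_nonpos (half_pos ht₀.1) ht.1.le (neg_nonpos.2 hβ₀)
  · exact (intervalIntegrable_one_sub_rpow_mul_rpow ha (by linarith)).const_mul _
  · refine Filter.Eventually.of_forall fun u hu => ?_
    rw [uIoc_of_le zero_le_one] at hu
    exact continuousAt_const.mul
      ((hr_at (hmem ht₀ hu)).comp (f := fun t => t * u) (continuousAt_id.mul continuousAt_const))

lemma continuousAt_integral_sub_rpow_mul {a t₀ : ℝ} (ha : -1 < a) (hβ₀ : 0 ≤ β)
    (hβ₁ : β < 1) (hr : ContinuousOn r (Ioc 0 1))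
    (hbound : ∀ s ∈ Ioc (0 : ℝ) 1, |r s| ≤ C * s ^ (-β)) (ht₀ : t₀ ∈ Ioo 0 1) :
    ContinuousAt (fun t => ∫ s in 0..t, (t - s) ^ a * r s) t₀ := by
  refine ((Real.continuousAt_rpow_const t₀ (a + 1) (Or.inl ht₀.1.ne')).mul
    (continuousAt_integral_one_sub_rpow_mul_comp_mul ha hβ₀ hβ₁ hr hbound ht₀)).congr ?_
  filter_upwards [Ioi_mem_nhds ht₀.1] with t ht
  exact (integral_sub_rpow_mul_eq_rpow_mul_integral ht a r).symm

end WeightedBound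

theorem stmt4 (θ₁ θ₂ : ℝ) (hθ₁ : θ₁ ∈ Set.Ioo (0:ℝ) 1) (hθ₂ : θ₂ ∈ Set.Ioo (0:ℝ) 1)
    (r : ℝ → ℝ) (hr : ContinuousOn r (Set.Ioc 0 1))
    (C : ℝ) (hbound : ∀ s ∈ Set.Ioc (0:ℝ) 1, |r s| ≤ C * s ^ (-θ₂)) :
    ∀ x ∈ Set.Ioo (0:ℝ) 1,
      HasDerivAt (fun y : ℝ => ∫ s in (0:ℝ)..y, (y - s) ^ θ₁ * r s)
        (∫ s in (0:ℝ)..x, θ₁ * (x - s) ^ (θ₁ - 1) * r s) x := by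
  intro x hx
  have hr_int : ∀ y ∈ Ioo (0 : ℝ) 1, IntervalIntegrable r volume 0 y := fun y hy =>
    (intervalIntegrable_iff_integrableOn_Ioc_of_le hy.1.le).2 <|
      (integrableOn_of_abs_le_mul_rpow hθ₂.2 hr hbound).mono_set (Ioc_subset_Ioc_right hy.2.le)
  have hg : ∀ t ∈ Ioo (0 : ℝ) 1,
      ContinuousAt (fun t => ∫ s in 0..t, θ₁ * (t - s) ^ (θ₁ - 1) * r s) t := fun t ht => by
    simpa only [mul_assoc, intervalIntegral.integral_const_mul] using
      (continuousAt_integral_sub_rpow_mul (by linarith [hθ₁.1]) hθ₂.1.le hθ₂.2 hr hbound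
        ht).const_mul θ₁
  have hFTC := intervalIntegral.integral_hasDerivAt_right
    (intervalIntegrable_integral_mul_sub_rpow_mul hθ₁.1 hx.1.le (hr_int x hx))
    (ContinuousAt.stronglyMeasurableAtFilter isOpen_Ioo hg x hx) (hg x hx)
  refine hFTC.congr_of_eventuallyEq ?_
  filter_upwards [Ioo_mem_nhds hx.1 hx.2] with y hy
  exact integral_sub_rpow_mul_eq_integral_integral hθ₁.1 hy.1.le (hr_int y hy)
end

section
/- Let m be a positive integer and let σ ∈ ℝ satisfy m−1 < σ < m. Let ψ : (0,1] → ℝ be continuously differentiable with |ψ(s)| + s|ψ'(s)| ≤ C₁ s^{σ−m} for all 0 < s < 1 and some constant C₁. Define w(x) = ∫₀ˣ (x-s)^{σ−m} ψ(s) ds for 0 < x < 1. Then w is differentiable on (0,1) with w'(x) = (1/x) ∫₀ˣ (x-s)^{σ−m} [ s ψ'(s) + (σ−m+1) ψ(s) ] ds, and moreover |w'(x)| ≤ C₁ · B(σ−m+1, σ−m+1) · x^{2(σ−m)} for all 0 < x < 1, where B denotes Euler's Beta function. -/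
/-- Euler's Beta function `B(a,b) = Γ(a)Γ(b)/Γ(a+b)`. -/
noncomputable def realBeta (a b : ℝ) : ℝ :=
  Real.Gamma a * Real.Gamma b / Real.Gamma (a + b)

/-!
The substitution `s = y t` gives `w(y) = y ^ (α + 1) ∫₀¹ (1 - t) ^ α ψ(y t) dt`, which moves the
parameter out of the singular kernel. The remaining integral may be differentiated under the
integral sign, the integrand `(1 - t) ^ α t ψ'(y t)` being dominated near `x` by a multiple of the
Beta integrand `t ^ α (1 - t) ^ α`; undoing the substitution gives the formula for `w'`. Since
`0 ≤ α + 1 ≤ 1`, the new integrand `s ψ'(s) + (α + 1) ψ(s)` is bounded by `C₁ s ^ α`, and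
`∫₀ˣ (x - s) ^ α s ^ α ds = B(α + 1, α + 1) x ^ (2α + 1)`.
-/

open MeasureTheory Set Filter Topology
open scoped Interval

lemma realBeta_comm (a b : ℝ) : realBeta a b = realBeta b a := by
  rw [realBeta, realBeta, mul_comm, add_comm]

lemma cpow_mul_one_sub_cpow_eq_ofReal_rpow {a b t : ℝ} (ht : t ∈ uIcc (0:ℝ) 1) :
    (t : ℂ) ^ ((a + 1 : ℝ) - 1 : ℂ) * (1 - (t : ℂ)) ^ ((b + 1 : ℝ) - 1 : ℂ)
      = ((t ^ a * (1 - t) ^ b : ℝ) : ℂ) := by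
  rw [uIcc_of_le zero_le_one] at ht
  push_cast
  rw [add_sub_cancel_right, add_sub_cancel_right, ← Complex.ofReal_one, ← Complex.ofReal_sub,
    ← Complex.ofReal_cpow ht.1, ← Complex.ofReal_cpow (sub_nonneg.2 ht.2)]

lemma intervalIntegrable_rpow_mul_one_sub_rpow {a b : ℝ} (ha : -1 < a) (hb : -1 < b) :
    IntervalIntegrable (fun t : ℝ => t ^ a * (1 - t) ^ b) volume 0 1 := by
  have h := Complex.betaIntegral_convergent (u := (a + 1 : ℝ)) (v := (b + 1 : ℝ))
    (by simpa using by linarith) (by simpa using by linarith)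
  have h' := intervalIntegrable_iff.1 <|
    h.congr fun t ht => cpow_mul_one_sub_cpow_eq_ofReal_rpow (uIoc_subset_uIcc ht)
  rw [intervalIntegrable_iff, IntegrableOn]
  simpa using h'.re

lemma integral_rpow_mul_one_sub_rpow {a b : ℝ} (ha : -1 < a) (hb : -1 < b) :
    ∫ t in (0:ℝ)..1, t ^ a * (1 - t) ^ b = realBeta (a + 1) (b + 1) := by
  -- `realBeta` is definitionally `ProbabilityTheory.beta`
  have h := ProbabilityTheory.beta_eq_betaIntegralReal (a + 1) (b + 1) (by linarith) (by linarith)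
  rw [Complex.betaIntegral,
    intervalIntegral.integral_congr fun t ht => cpow_mul_one_sub_cpow_eq_ofReal_rpow ht,
    intervalIntegral.integral_ofReal, Complex.ofReal_re] at h
  exact h.symm

lemma integral_sub_rpow_mul_eq (α : ℝ) (f : ℝ → ℝ) {y : ℝ} (hy : 0 < y) :
    ∫ s in (0:ℝ)..y, (y - s) ^ α * f s
      = y ^ (α + 1) * ∫ t in (0:ℝ)..1, (1 - t) ^ α * f (y * t) := by
  have hsub := intervalIntegral.integral_comp_mul_left (a := 0) (b := 1)
    (fun s => (y - s) ^ α * f s) hy.ne'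
  rw [mul_zero, mul_one, smul_eq_mul, eq_inv_mul_iff_mul_eq₀ hy.ne'] at hsub
  rw [← hsub, intervalIntegral.integral_congr (g := fun t => y ^ α * ((1 - t) ^ α * f (y * t))),
    intervalIntegral.integral_const_mul, Real.rpow_add_one hy.ne']
  · ring
  · intro t ht
    rw [uIcc_of_le zero_le_one] at ht
    dsimp only
    rw [← mul_one_sub, Real.mul_rpow hy.le (sub_nonneg.2 ht.2), mul_assoc]

lemma mul_mem_Ioo_of_mem_Ioc {y t : ℝ} (hy : y ∈ Ioo (0:ℝ) 1) (ht : t ∈ Ioc (0:ℝ) 1) :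
    y * t ∈ Ioo (0:ℝ) 1 :=
  ⟨mul_pos hy.1 ht.1, by nlinarith [hy.1, hy.2, ht.2]⟩

lemma abs_one_sub_rpow_mul_comp_mul_le {α β C y t : ℝ} {f : ℝ → ℝ} (hy : 0 < y)
    (ht : t ∈ Ioc (0:ℝ) 1) (hf : ∀ s ∈ Ioc 0 y, |f s| ≤ C * s ^ β) :
    |(1 - t) ^ α * f (y * t)| ≤ C * y ^ β * (t ^ β * (1 - t) ^ α) := by
  have hkernel : 0 ≤ (1 - t) ^ α := Real.rpow_nonneg (sub_nonneg.2 ht.2) α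
  have hyt : y * t ∈ Ioc 0 y := ⟨mul_pos hy ht.1, mul_le_of_le_one_right hy.le ht.2⟩
  calc |(1 - t) ^ α * f (y * t)| = (1 - t) ^ α * |f (y * t)| := by
        rw [abs_mul, abs_of_nonneg hkernel]
    _ ≤ (1 - t) ^ α * (C * (y * t) ^ β) := mul_le_mul_of_nonneg_left (hf _ hyt) hkernel
    _ = C * y ^ β * (t ^ β * (1 - t) ^ α) := by rw [Real.mul_rpow hy.le ht.1.le]; ring

lemma aestronglyMeasurable_one_sub_rpow_mul_comp_mul (α : ℝ) {y : ℝ} {f : ℝ → ℝ}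
    (hy : y ∈ Ioo (0:ℝ) 1) (hf : ContinuousOn f (Ioo 0 1)) :
    AEStronglyMeasurable (fun t => (1 - t) ^ α * f (y * t)) (volume.restrict (Ι (0:ℝ) 1)) := by
  rw [uIoc_of_le zero_le_one]
  exact ((measurable_const.sub measurable_id).pow_const α).aestronglyMeasurable.mul
    ((hf.comp (continuous_const.mul continuous_id).continuousOn fun t ht =>
      mul_mem_Ioo_of_mem_Ioc hy ht).aestronglyMeasurable measurableSet_Ioc)

lemma intervalIntegrable_one_sub_rpow_mul_comp_mul {α β C y : ℝ} {f : ℝ → ℝ}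
    (hα : -1 < α) (hβ : -1 < β) (hy : y ∈ Ioo (0:ℝ) 1) (hf : ContinuousOn f (Ioo 0 1))
    (hf_le : ∀ s ∈ Ioo (0:ℝ) 1, |f s| ≤ C * s ^ β) :
    IntervalIntegrable (fun t => (1 - t) ^ α * f (y * t)) volume 0 1 := by
  refine ((intervalIntegrable_rpow_mul_one_sub_rpow hβ hα).const_mul (C * y ^ β)).mono_fun
    (aestronglyMeasurable_one_sub_rpow_mul_comp_mul α hy hf) ?_
  rw [uIoc_of_le zero_le_one]
  filter_upwards [ae_restrict_mem measurableSet_Ioc] with t ht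
  rw [Real.norm_eq_abs, Real.norm_eq_abs]
  exact (abs_one_sub_rpow_mul_comp_mul_le hy.1 ht
    fun s hs => hf_le s ⟨hs.1, hs.2.trans_lt hy.2⟩).trans (le_abs_self _)

lemma hasDerivAt_integral_one_sub_rpow_mul_comp_mul {α β C x : ℝ} {ψ ψ' : ℝ → ℝ}
    (hα : -1 < α) (hβ : -1 < β) (hx : x ∈ Ioo (0:ℝ) 1)
    (hψ : ∀ s ∈ Ioo (0:ℝ) 1, HasDerivAt ψ (ψ' s) s) (hψ' : ContinuousOn ψ' (Ioo 0 1))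
    (hψ_le : ∀ s ∈ Ioo (0:ℝ) 1, |ψ s| ≤ C * s ^ β)
    (hψ'_le : ∀ s ∈ Ioo (0:ℝ) 1, |s * ψ' s| ≤ C * s ^ β) :
    HasDerivAt (fun y => ∫ t in (0:ℝ)..1, (1 - t) ^ α * ψ (y * t))
      (x⁻¹ * ∫ t in (0:ℝ)..1, (1 - t) ^ α * (x * t * ψ' (x * t))) x := by
  have hψ_cont : ContinuousOn ψ (Ioo 0 1) := fun s hs =>
    (hψ s hs).continuousAt.continuousWithinAt
  have hφ_cont : ContinuousOn (fun s => s * ψ' s) (Ioo 0 1) := continuousOn_id.mul hψ'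
  have hnhds : Ioo (x / 2) 1 ∈ 𝓝 x := Ioo_mem_nhds (by linarith [hx.1]) hx.2
  have hmem : ∀ y ∈ Ioo (x / 2) 1, y ∈ Ioo (0:ℝ) 1 := fun y hy =>
    ⟨by linarith [hx.1, hy.1], hy.2⟩
  set K : ℝ := |C| * ((x / 2) ^ (β - 1) + 1)
  have hK : ∀ y ∈ Ioo (x / 2) 1, |C| * y ^ (β - 1) ≤ K := by
    intro y hy
    refine mul_le_mul_of_nonneg_left ?_ (abs_nonneg C)
    rcases le_total (β - 1) 0 with hβ1 | hβ1
    · linarith [Real.rpow_le_rpow_of_nonpos (by linarith [hx.1]) hy.1.le hβ1]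
    · linarith [Real.rpow_le_one (hmem y hy).1.le hy.2.le hβ1,
        Real.rpow_nonneg (by linarith [hx.1] : (0:ℝ) ≤ x / 2) (β - 1)]
  -- `t ψ'(y t)` is written as `y⁻¹ (y t ψ'(y t))` so that the bound on `s ψ'(s)` applies
  have key := intervalIntegral.hasDerivAt_integral_of_dominated_loc_of_deriv_le
    (F := fun y t => (1 - t) ^ α * ψ (y * t))
    (F' := fun y t => y⁻¹ * ((1 - t) ^ α * (y * t * ψ' (y * t))))
    (bound := fun t => K * (t ^ β * (1 - t) ^ α)) hnhds
    (eventually_of_mem hnhds fun y hy =>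
      aestronglyMeasurable_one_sub_rpow_mul_comp_mul α (hmem y hy) hψ_cont)
    (intervalIntegrable_one_sub_rpow_mul_comp_mul hα hβ hx hψ_cont hψ_le)
    ((aestronglyMeasurable_one_sub_rpow_mul_comp_mul α hx hφ_cont).const_mul x⁻¹)
    ?_ ((intervalIntegrable_rpow_mul_one_sub_rpow hβ hα).const_mul K) ?_
  · simpa only [intervalIntegral.integral_const_mul] using key.2
  · refine ae_of_all _ fun t ht y hy => ?_
    rw [uIoc_of_le zero_le_one] at ht
    have hy0 := (hmem y hy).1
    have hφ := abs_one_sub_rpow_mul_comp_mul_le (α := α) hy0 ht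
      fun s hs => (hψ'_le s ⟨hs.1, hs.2.trans_lt hy.2⟩).trans
        (mul_le_mul_of_nonneg_right (le_abs_self C) (Real.rpow_nonneg hs.1.le β))
    calc ‖y⁻¹ * ((1 - t) ^ α * (y * t * ψ' (y * t)))‖
        = y⁻¹ * |(1 - t) ^ α * (y * t * ψ' (y * t))| := by
          rw [Real.norm_eq_abs, abs_mul, abs_of_pos (inv_pos.2 hy0)]
      _ ≤ y⁻¹ * (|C| * y ^ β * (t ^ β * (1 - t) ^ α)) := by gcongr
      _ = |C| * y ^ (β - 1) * (t ^ β * (1 - t) ^ α) := by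
          rw [Real.rpow_sub_one hy0.ne']; field_simp
      _ ≤ K * (t ^ β * (1 - t) ^ α) := by
          gcongr
          · exact mul_nonneg (Real.rpow_nonneg ht.1.le β) (Real.rpow_nonneg (sub_nonneg.2 ht.2) α)
          · exact hK y hy
  · refine ae_of_all _ fun t ht y hy => ?_
    rw [uIoc_of_le zero_le_one] at ht
    have hchain := ((hψ _ (mul_mem_Ioo_of_mem_Ioc (hmem y hy) ht)).comp y
      (hasDerivAt_mul_const t)).const_mul ((1 - t) ^ α)
    exact hchain.congr_deriv (by field_simp [(hmem y hy).1.ne'])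

theorem hasDerivAt_integral_sub_rpow_mul {α β C x : ℝ} {ψ ψ' : ℝ → ℝ}
    (hα : -1 < α) (hβ : -1 < β) (hx : x ∈ Ioo (0:ℝ) 1)
    (hψ : ∀ s ∈ Ioo (0:ℝ) 1, HasDerivAt ψ (ψ' s) s) (hψ' : ContinuousOn ψ' (Ioo 0 1))
    (hψ_le : ∀ s ∈ Ioo (0:ℝ) 1, |ψ s| ≤ C * s ^ β)
    (hψ'_le : ∀ s ∈ Ioo (0:ℝ) 1, |s * ψ' s| ≤ C * s ^ β) :
    HasDerivAt (fun y => ∫ s in (0:ℝ)..y, (y - s) ^ α * ψ s)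
      ((1 / x) * ∫ s in (0:ℝ)..x, (x - s) ^ α * (s * ψ' s + (α + 1) * ψ s)) x := by
  set I := ∫ t in (0:ℝ)..1, (1 - t) ^ α * ψ (x * t)
  set J := ∫ t in (0:ℝ)..1, (1 - t) ^ α * (x * t * ψ' (x * t))
  have hw : (fun y => ∫ s in (0:ℝ)..y, (y - s) ^ α * ψ s)
      =ᶠ[𝓝 x] fun y => y ^ (α + 1) * ∫ t in (0:ℝ)..1, (1 - t) ^ α * ψ (y * t) :=
    eventually_of_mem (Ioi_mem_nhds hx.1) fun y hy => integral_sub_rpow_mul_eq α ψ hy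
  have hpow : HasDerivAt (fun y => y ^ (α + 1)) ((α + 1) * x ^ α) x := by
    simpa using Real.hasDerivAt_rpow_const (p := α + 1) (Or.inl hx.1.ne')
  have hI := hasDerivAt_integral_one_sub_rpow_mul_comp_mul hα hβ hx hψ hψ' hψ_le hψ'_le
  have hsplit : ∫ t in (0:ℝ)..1, (1 - t) ^ α * (x * t * ψ' (x * t) + (α + 1) * ψ (x * t))
      = J + (α + 1) * I := by
    have hψ_cont : ContinuousOn ψ (Ioo 0 1) := fun s hs =>
      (hψ s hs).continuousAt.continuousWithinAt
    have hJ_int : IntervalIntegrable (fun t => (1 - t) ^ α * (x * t * ψ' (x * t))) volume 0 1 :=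
      intervalIntegrable_one_sub_rpow_mul_comp_mul (f := fun s => s * ψ' s) hα hβ hx
        (continuousOn_id.mul hψ') hψ'_le
    have hI_int : IntervalIntegrable (fun t => (1 - t) ^ α * ψ (x * t)) volume 0 1 :=
      intervalIntegrable_one_sub_rpow_mul_comp_mul hα hβ hx hψ_cont hψ_le
    rw [← intervalIntegral.integral_const_mul, ← intervalIntegral.integral_add hJ_int
      (hI_int.const_mul _)]
    exact intervalIntegral.integral_congr fun t _ => by ring
  refine ((hpow.mul hI).congr_of_eventuallyEq hw).congr_deriv ?_
  show (α + 1) * x ^ α * I + x ^ (α + 1) * (x⁻¹ * J) = _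
  rw [integral_sub_rpow_mul_eq α _ hx.1, hsplit, Real.rpow_add_one hx.1.ne']
  field_simp [hx.1.ne']
  ring

lemma abs_mul_add_mul_le {a b c s B : ℝ} (hs : 0 ≤ s) (hc0 : 0 ≤ c) (hc1 : c ≤ 1)
    (h : |a| + s * |b| ≤ B) : |s * b + c * a| ≤ B :=
  calc |s * b + c * a| ≤ |s * b| + |c * a| := abs_add_le _ _
    _ = s * |b| + c * |a| := by rw [abs_mul, abs_mul, abs_of_nonneg hs, abs_of_nonneg hc0]
    _ ≤ |a| + s * |b| := by nlinarith [abs_nonneg a]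
    _ ≤ B := h

lemma abs_integral_sub_rpow_mul_le {α β C x : ℝ} {g : ℝ → ℝ} (hα : -1 < α) (hβ : -1 < β)
    (hx : 0 < x) (hg : ∀ s ∈ Ioc 0 x, |g s| ≤ C * s ^ β) :
    |∫ s in (0:ℝ)..x, (x - s) ^ α * g s| ≤ C * realBeta (α + 1) (β + 1) * x ^ (α + β + 1) := by
  have hint : |∫ t in (0:ℝ)..1, (1 - t) ^ α * g (x * t)|
      ≤ ∫ t in (0:ℝ)..1, C * x ^ β * (t ^ β * (1 - t) ^ α) := by
    refine intervalIntegral.norm_integral_le_of_norm_le zero_le_one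
      (ae_of_all _ fun t ht => (Real.norm_eq_abs _).trans_le
        (abs_one_sub_rpow_mul_comp_mul_le (α := α) hx ht hg)) ?_
    exact (intervalIntegrable_rpow_mul_one_sub_rpow hβ hα).const_mul _
  rw [intervalIntegral.integral_const_mul, integral_rpow_mul_one_sub_rpow hβ hα,
    realBeta_comm] at hint
  rw [integral_sub_rpow_mul_eq α g hx, abs_mul, abs_of_pos (Real.rpow_pos_of_pos hx _),
    show α + β + 1 = (α + 1) + β by ring, Real.rpow_add hx (α + 1) β]
  calc x ^ (α + 1) * |∫ t in (0:ℝ)..1, (1 - t) ^ α * g (x * t)|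
      ≤ x ^ (α + 1) * (C * x ^ β * realBeta (α + 1) (β + 1)) := by gcongr
    _ = C * realBeta (α + 1) (β + 1) * (x ^ (α + 1) * x ^ β) := by ring

theorem stmt5_general (m : ℕ) (σ : ℝ) (hσ1 : (m:ℝ) - 1 < σ) (hσ2 : σ < m)
    (ψ : ℝ → ℝ) (hψ : ContDiffOn ℝ 1 ψ (Set.Ioc 0 1))
    (C₁ : ℝ)
    (hbound : ∀ s ∈ Set.Ioo (0:ℝ) 1,
      |ψ s| + s * |derivWithin ψ (Set.Ioc 0 1) s| ≤ C₁ * s ^ (σ - m)) :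
    ∀ x ∈ Set.Ioo (0:ℝ) 1,
      HasDerivAt (fun y : ℝ => ∫ s in (0:ℝ)..y, (y - s) ^ (σ - m) * ψ s)
        ((1 / x) * ∫ s in (0:ℝ)..x, (x - s) ^ (σ - m) *
          (s * derivWithin ψ (Set.Ioc 0 1) s + (σ - m + 1) * ψ s)) x
      ∧ |(1 / x) * ∫ s in (0:ℝ)..x, (x - s) ^ (σ - m) *
          (s * derivWithin ψ (Set.Ioc 0 1) s + (σ - m + 1) * ψ s)|
          ≤ C₁ * realBeta (σ - m + 1) (σ - m + 1) * x ^ (2 * (σ - m)) := by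
  intro x hx
  set α := σ - m
  set ψ' := derivWithin ψ (Ioc 0 1)
  have hα0 : -1 < α := by linarith
  have hα1 : α ≤ 0 := by linarith
  have hψ_deriv : ∀ s ∈ Ioo (0:ℝ) 1, HasDerivAt ψ (ψ' s) s := fun s hs =>
    ((hψ.differentiableOn one_ne_zero s (Ioo_subset_Ioc_self hs)).hasDerivWithinAt).hasDerivAt
      (Ioc_mem_nhds hs.1 hs.2)
  have hψ'_cont : ContinuousOn ψ' (Ioo 0 1) :=
    (hψ.continuousOn_derivWithin (uniqueDiffOn_Ioc 0 1) le_rfl).mono Ioo_subset_Ioc_self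
  have hφ_abs : ∀ s ∈ Ioo (0:ℝ) 1, |s * ψ' s| = s * |ψ' s| := fun s hs => by
    rw [abs_mul, abs_of_pos hs.1]
  have hψ_le : ∀ s ∈ Ioo (0:ℝ) 1, |ψ s| ≤ C₁ * s ^ α := fun s hs =>
    (le_add_of_nonneg_right (mul_nonneg hs.1.le (abs_nonneg (ψ' s)))).trans (hbound s hs)
  have hφ_le : ∀ s ∈ Ioo (0:ℝ) 1, |s * ψ' s| ≤ C₁ * s ^ α := fun s hs =>
    (hφ_abs s hs).trans_le <|
      (le_add_of_nonneg_left (abs_nonneg (ψ s)) : s * |ψ' s| ≤ _).trans (hbound s hs)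
  have hg_le : ∀ s ∈ Ioc 0 x, |s * ψ' s + (α + 1) * ψ s| ≤ C₁ * s ^ α := fun s hs =>
    abs_mul_add_mul_le hs.1.le (by linarith) (by linarith) (hbound s ⟨hs.1, hs.2.trans_lt hx.2⟩)
  refine ⟨hasDerivAt_integral_sub_rpow_mul hα0 hα0 hx hψ_deriv hψ'_cont hψ_le hφ_le, ?_⟩
  rw [abs_mul, abs_of_pos (one_div_pos.2 hx.1)]
  calc 1 / x * |∫ s in (0:ℝ)..x, (x - s) ^ α * (s * ψ' s + (α + 1) * ψ s)|
      ≤ 1 / x * (C₁ * realBeta (α + 1) (α + 1) * x ^ (α + α + 1)) :=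
        mul_le_mul_of_nonneg_left (abs_integral_sub_rpow_mul_le hα0 hα0 hx.1 hg_le)
          (one_div_pos.2 hx.1).le
    _ = C₁ * realBeta (α + 1) (α + 1) * x ^ (2 * α) := by
        rw [← two_mul, Real.rpow_add_one hx.1.ne']
        field_simp [hx.1.ne']

theorem stmt5 (m : ℕ) (hm : 0 < m) (σ : ℝ) (hσ1 : (m:ℝ) - 1 < σ) (hσ2 : σ < m)
    (ψ : ℝ → ℝ) (hψ : ContDiffOn ℝ 1 ψ (Set.Ioc 0 1))
    (C₁ : ℝ)
    (hbound : ∀ s ∈ Set.Ioo (0:ℝ) 1,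
      |ψ s| + s * |derivWithin ψ (Set.Ioc 0 1) s| ≤ C₁ * s ^ (σ - m)) :
    ∀ x ∈ Set.Ioo (0:ℝ) 1,
      HasDerivAt (fun y : ℝ => ∫ s in (0:ℝ)..y, (y - s) ^ (σ - m) * ψ s)
        ((1 / x) * ∫ s in (0:ℝ)..x, (x - s) ^ (σ - m) *
          (s * derivWithin ψ (Set.Ioc 0 1) s + (σ - m + 1) * ψ s)) x
      ∧ |(1 / x) * ∫ s in (0:ℝ)..x, (x - s) ^ (σ - m) *
          (s * derivWithin ψ (Set.Ioc 0 1) s + (σ - m + 1) * ψ s)|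
          ≤ C₁ * realBeta (σ - m + 1) (σ - m + 1) * x ^ (2 * (σ - m)) :=
  stmt5_general m σ hσ1 hσ2 ψ hψ C₁ hbound
end

section
/- Let m be a positive integer and let σ ∈ ℝ satisfy m−1 < σ < m. Let p be a polynomial of degree at most m−1, and let φ : [0,1] → ℝ be continuous on [0,1], continuously differentiable on (0,1], with |φ'(s)| ≤ C₀ s^{σ−m} for all 0 < s ≤ 1 and some constant C₀. Define r(x) = p(x) + (1/Γ(σ)) ∫₀ˣ (x-s)^{σ−1} φ(s) ds for 0 ≤ x ≤ 1. Then r is m-times differentiable on (0,1], with r^{(m)}(x) = ( φ(0)/Γ(σ−m+1) ) x^{σ−m} + (1/Γ(σ−m+1)) ∫₀ˣ (x-s)^{σ−m} φ'(s) ds, and there exists a constant C, independent of x, such that |r^{(m)}(x)| ≤ C x^{σ−m} for all 0 < x ≤ 1. -/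
/-- `r(x) = p(x) + (1/Γ(σ)) ∫₀ˣ (x-s)^{σ−1} φ(s) ds`. -/
noncomputable def rfun (σ : ℝ) (p : Polynomial ℝ) (φ : ℝ → ℝ) : ℝ → ℝ :=
  fun x => p.eval x + (1 / Real.Gamma σ) *
    ∫ s in (0:ℝ)..x, (x - s) ^ (σ - 1) * φ s

/-!
Write `I^α ψ(x) = Γ(α)⁻¹ ∫₀ˣ (x - s)^(α-1) ψ(s) ds`, so that `r = p + I^σ φ`. One integration by
parts (`φ = φ(0) + ∫₀ˢ φ'`, then Fubini) gives `r = p + φ(0) x^σ / Γ(σ+1) + I^(σ+1) φ'` on `(0, 1]`.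
For `α > 1`, Fubini again gives `I^α ψ = ∫₀ˣ I^(α-1) ψ`, hence `(I^α ψ)' = I^(α-1) ψ`, while
`(x^β / Γ(β+1))' = x^(β-1) / Γ(β)`: each derivative lowers every exponent by one. After `m` steps
the polynomial is gone and `φ(0) x^(σ-m) / Γ(σ-m+1) + I^(σ-m+1) φ'` is left, a fractional integral
of positive order because `σ > m - 1`. The weight `|φ'(s)| ≤ C₀ s^(σ-m)` is integrable against
every kernel `(x - s)^a` with `a > -1`, and the scaling `s = x u` turns these integrals into Beta
integrals; this gives continuity of `I^α φ'` for `α > 0` and the bound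
`|I^(σ-m+1) φ'(x)| ≤ C x^(2(σ-m)+1) ≤ C x^(σ-m)`.
-/

open MeasureTheory Set Filter Real Topology Function

lemma integral_sub_const_rpow {a : ℝ} (ha : -1 < a) (s x : ℝ) :
    ∫ t in s..x, (t - s) ^ a = (x - s) ^ (a + 1) / (a + 1) := by
  rw [intervalIntegral.integral_comp_sub_right (fun t => t ^ a), sub_self,
    integral_rpow (Or.inl ha), zero_rpow (by linarith), sub_zero]

lemma integral_const_sub_rpow {a : ℝ} (ha : -1 < a) (s x : ℝ) :
    ∫ t in s..x, (x - t) ^ a = (x - s) ^ (a + 1) / (a + 1) := by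
  rw [intervalIntegral.integral_comp_sub_left (fun t => t ^ a), sub_self,
    integral_rpow (Or.inl ha), zero_rpow (by linarith), sub_zero]

lemma rpow_le_rpow_add_rpow_of_mem_Icc {c d y : ℝ} (hc : 0 < c) (hy : y ∈ Icc c d) (a : ℝ) :
    y ^ a ≤ c ^ a + d ^ a := by
  rcases le_or_gt 0 a with ha | ha
  · exact (rpow_le_rpow (hc.le.trans hy.1) hy.2 ha).trans
      (le_add_of_nonneg_left (rpow_nonneg hc.le _))
  · exact (rpow_le_rpow_of_nonpos hc hy.1 ha.le).trans
      (le_add_of_nonneg_right (rpow_nonneg (hc.le.trans (hy.1.trans hy.2)) _))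

lemma intervalIntegrable_const_sub_rpow {a : ℝ} (ha : -1 < a) (x : ℝ) :
    IntervalIntegrable (fun s => (x - s) ^ a) volume 0 x := by
  simpa using (intervalIntegral.intervalIntegrable_rpow' ha (a := x) (b := 0)).comp_sub_left x

lemma integrableOn_sub_rpow_mul_rpow {a b x : ℝ} (ha : -1 < a) (hb : -1 < b) (hx : 0 < x) :
    IntegrableOn (fun s => (x - s) ^ a * s ^ b) (Ioc 0 x) := by
  have hsb : IntegrableOn (fun s : ℝ => s ^ b) (Ioc 0 x) :=
    (intervalIntegral.intervalIntegrable_rpow' hb).1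
  have hxa : IntegrableOn (fun s : ℝ => (x - s) ^ a) (Ioc 0 x) :=
    (intervalIntegrable_const_sub_rpow ha x).1
  -- away from the endpoint where it is singular, each factor is bounded
  refine ((hsb.const_mul ((x / 2) ^ a + x ^ a)).add (hxa.const_mul ((x / 2) ^ b + x ^ b))).mono'
    (by fun_prop) ((ae_restrict_iff' measurableSet_Ioc).2 (Eventually.of_forall fun s hs => ?_))
  have hxs : 0 ≤ (x - s) ^ a := rpow_nonneg (by linarith [hs.2]) _
  have hsb : 0 ≤ s ^ b := rpow_nonneg hs.1.le _
  rw [norm_mul, norm_of_nonneg hxs, norm_of_nonneg hsb, Pi.add_apply]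
  rcases le_or_gt s (x / 2) with hs2 | hs2
  · have := rpow_le_rpow_add_rpow_of_mem_Icc (y := x - s) (d := x) (half_pos hx)
      ⟨by linarith, by linarith [hs.1]⟩ a
    nlinarith [mul_nonneg (by positivity : (0:ℝ) ≤ (x / 2) ^ b + x ^ b) hxs]
  · have := rpow_le_rpow_add_rpow_of_mem_Icc (y := s) (d := x) (half_pos hx) ⟨hs2.le, hs.2⟩ b
    nlinarith [mul_nonneg (by positivity : (0:ℝ) ≤ (x / 2) ^ a + x ^ a) hsb]

section Triangle

variable {f : ℝ → ℝ → ℝ} {g : ℝ → ℝ} {x : ℝ}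

lemma indicator_triangle_slice_left (F : ℝ × ℝ → ℝ) (t : ℝ) :
    (fun s => {q : ℝ × ℝ | q.2 ≤ q.1}.indicator F (t, s)) =
      (Iic t).indicator (fun s => F (t, s)) := by
  ext s; simp [indicator_apply]

lemma indicator_triangle_slice_right (F : ℝ × ℝ → ℝ) (s : ℝ) :
    (fun t => {q : ℝ × ℝ | q.2 ≤ q.1}.indicator F (t, s)) =
      (Ici s).indicator (fun t => F (t, s)) := by
  ext t; simp [indicator_apply]

lemma integrable_indicator_triangle (hf : Measurable (uncurry f))
    (hfi : ∀ t ∈ Ioc 0 x, IntegrableOn (f t) (Ioc 0 t))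
    (hfg : ∀ t ∈ Ioc 0 x, ∫ s in Ioc 0 t, |f t s| ≤ g t) (hg : IntegrableOn g (Ioc 0 x)) :
    Integrable ({q : ℝ × ℝ | q.2 ≤ q.1}.indicator (uncurry f))
      ((volume.restrict (Ioc 0 x)).prod (volume.restrict (Ioc 0 x))) := by
  have hF : Measurable ({q : ℝ × ℝ | q.2 ≤ q.1}.indicator (uncurry f)) :=
    hf.indicator (measurableSet_le measurable_snd measurable_fst)
  rw [integrable_prod_iff hF.aestronglyMeasurable]
  refine ⟨(ae_restrict_iff' measurableSet_Ioc).2 (Eventually.of_forall fun t ht => ?_),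
    hg.mono' hF.aestronglyMeasurable.norm.integral_prod_right'
      ((ae_restrict_iff' measurableSet_Ioc).2 (Eventually.of_forall fun t ht => ?_))⟩
  · rw [indicator_triangle_slice_left, integrable_indicator_iff measurableSet_Iic, IntegrableOn,
      Measure.restrict_restrict measurableSet_Iic, Iic_inter_Ioc_of_le ht.2]
    exact hfi t ht
  · simp only [norm_indicator_eq_indicator_norm]
    rw [indicator_triangle_slice_left, integral_indicator measurableSet_Iic,
      Measure.restrict_restrict measurableSet_Iic, Iic_inter_Ioc_of_le ht.2,
      norm_of_nonneg (integral_nonneg fun _ => norm_nonneg _)]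
    exact hfg t ht

lemma intervalIntegral_triangle_swap (hx : 0 ≤ x) (hf : Measurable (uncurry f))
    (hfi : ∀ t ∈ Ioc 0 x, IntegrableOn (f t) (Ioc 0 t))
    (hfg : ∀ t ∈ Ioc 0 x, ∫ s in Ioc 0 t, |f t s| ≤ g t) (hg : IntegrableOn g (Ioc 0 x)) :
    ∫ t in 0..x, ∫ s in 0..t, f t s = ∫ s in 0..x, ∫ t in s..x, f t s := by
  have h := integral_integral_swap
    (f := fun t s => {q : ℝ × ℝ | q.2 ≤ q.1}.indicator (uncurry f) (t, s))
    (integrable_indicator_triangle hf hfi hfg hg)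
  rw [intervalIntegral.integral_of_le hx, intervalIntegral.integral_of_le hx]
  convert h using 1
  · refine setIntegral_congr_fun measurableSet_Ioc fun t ht => ?_
    rw [intervalIntegral.integral_of_le ht.1.le, indicator_triangle_slice_left,
      integral_indicator measurableSet_Iic, Measure.restrict_restrict measurableSet_Iic,
      Iic_inter_Ioc_of_le ht.2]
    rfl
  · refine setIntegral_congr_fun measurableSet_Ioc fun s hs => ?_
    have hIcc : Ici s ∩ Ioc 0 x = Icc s x :=
      Set.ext fun t => ⟨fun h => ⟨h.1, h.2.2⟩, fun h => ⟨h.1, hs.1.trans_le h.1, h.2⟩⟩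
    rw [intervalIntegral.integral_of_le hs.2, indicator_triangle_slice_right,
      integral_indicator measurableSet_Ici, Measure.restrict_restrict measurableSet_Ici, hIcc,
      integral_Icc_eq_integral_Ioc]
    rfl

end Triangle

/-- The Euler Beta integral `B(a + 1, b + 1)`. -/
noncomputable def betaReal (a b : ℝ) : ℝ := ∫ u in (0:ℝ)..1, (1 - u) ^ a * u ^ b

lemma integral_sub_rpow_mul_eq_rpow_mul (ψ : ℝ → ℝ) (a : ℝ) {x : ℝ} (hx : 0 < x) :
    ∫ s in 0..x, (x - s) ^ a * ψ s = x ^ (a + 1) * ∫ u in 0..1, (1 - u) ^ a * ψ (x * u) := by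
  have h := intervalIntegral.integral_comp_mul_left (fun s => (x - s) ^ a * ψ s) hx.ne'
    (a := 0) (b := 1)
  simp only [mul_zero, mul_one, smul_eq_mul] at h
  have hscale : ∫ u in (0:ℝ)..1, (x - x * u) ^ a * ψ (x * u) =
      x ^ a * ∫ u in (0:ℝ)..1, (1 - u) ^ a * ψ (x * u) := by
    rw [← intervalIntegral.integral_const_mul]
    refine intervalIntegral.integral_congr fun u hu => ?_
    rw [uIcc_of_le zero_le_one] at hu
    rw [show x - x * u = x * (1 - u) by ring, mul_rpow hx.le (by linarith [hu.2])]
    ring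
  rw [rpow_add hx, rpow_one, mul_comm (x ^ a) x, mul_assoc, ← hscale, h]
  field_simp

lemma integral_sub_rpow_mul_rpow {a b x : ℝ} (hx : 0 < x) :
    ∫ s in 0..x, (x - s) ^ a * s ^ b = x ^ (a + b + 1) * betaReal a b := by
  rw [integral_sub_rpow_mul_eq_rpow_mul (fun s => s ^ b) a hx, betaReal, add_right_comm,
    rpow_add hx (a + 1) b, mul_assoc]
  congr 1
  rw [← intervalIntegral.integral_const_mul]
  refine intervalIntegral.integral_congr fun u hu => ?_
  rw [uIcc_of_le zero_le_one] at hu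
  simp only [mul_rpow hx.le hu.1]
  ring

section PowerBounded

variable {ψ : ℝ → ℝ} {C a b x : ℝ}

lemma nonneg_of_abs_le_mul_rpow_s8 (hψb : ∀ s, 0 < s → |ψ s| ≤ C * s ^ b) : 0 ≤ C := by
  simpa using (abs_nonneg _).trans (hψb 1 one_pos)

lemma abs_sub_rpow_mul_le (hψb : ∀ s, 0 < s → |ψ s| ≤ C * s ^ b) {s : ℝ} (hs : s ∈ Ioc 0 x) :
    |(x - s) ^ a * ψ s| ≤ C * ((x - s) ^ a * s ^ b) := by
  have hxs : 0 ≤ (x - s) ^ a := rpow_nonneg (by linarith [hs.2]) _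
  rw [abs_mul, abs_of_nonneg hxs]
  exact (mul_le_mul_of_nonneg_left (hψb s hs.1) hxs).trans_eq (by ring)

lemma integrableOn_sub_rpow_mul (hψ : Measurable ψ) (hψb : ∀ s, 0 < s → |ψ s| ≤ C * s ^ b)
    (ha : -1 < a) (hb : -1 < b) (hx : 0 < x) :
    IntegrableOn (fun s => (x - s) ^ a * ψ s) (Ioc 0 x) :=
  ((integrableOn_sub_rpow_mul_rpow ha hb hx).const_mul C).mono' (by fun_prop)
    ((ae_restrict_iff' measurableSet_Ioc).2 (Eventually.of_forall fun _ hs =>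
      abs_sub_rpow_mul_le hψb hs))

lemma integral_abs_sub_rpow_mul_le (hψ : Measurable ψ) (hψb : ∀ s, 0 < s → |ψ s| ≤ C * s ^ b)
    (ha : -1 < a) (hb : -1 < b) (hx : 0 < x) :
    ∫ s in Ioc 0 x, |(x - s) ^ a * ψ s| ≤ C * betaReal a b * x ^ (a + b + 1) := by
  calc ∫ s in Ioc 0 x, |(x - s) ^ a * ψ s|
      ≤ ∫ s in Ioc 0 x, C * ((x - s) ^ a * s ^ b) :=
        setIntegral_mono_on (integrableOn_sub_rpow_mul hψ hψb ha hb hx).abs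
          ((integrableOn_sub_rpow_mul_rpow ha hb hx).const_mul C) measurableSet_Ioc
          fun _ hs => abs_sub_rpow_mul_le hψb hs
    _ = C * betaReal a b * x ^ (a + b + 1) := by
        rw [integral_const_mul, ← intervalIntegral.integral_of_le hx.le,
          integral_sub_rpow_mul_rpow hx]
        ring

lemma abs_integral_sub_rpow_mul_le_s8 (hψ : Measurable ψ) (hψb : ∀ s, 0 < s → |ψ s| ≤ C * s ^ b)
    (ha : -1 < a) (hb : -1 < b) (hx : 0 < x) :
    |∫ s in 0..x, (x - s) ^ a * ψ s| ≤ C * betaReal a b * x ^ (a + b + 1) := by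
  rw [intervalIntegral.integral_of_le hx.le]
  exact (abs_integral_le_integral_abs).trans (integral_abs_sub_rpow_mul_le hψ hψb ha hb hx)

lemma continuousAt_integral_sub_rpow_mul_s8 (hψ : Measurable ψ)
    (hψb : ∀ s, 0 < s → |ψ s| ≤ C * s ^ b) (hψc : ∀ᵐ s, ContinuousAt ψ s)
    (ha : -1 < a) (hb : -1 < b) (hx : 0 < x) :
    ContinuousAt (fun y => ∫ s in 0..y, (y - s) ^ a * ψ s) x := by
  have hC := nonneg_of_abs_le_mul_rpow_s8 hψb
  have hnear : ∀ᶠ y in 𝓝 x, 0 < y ∧ y ^ b < x ^ b + 1 :=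
    (lt_mem_nhds hx).and ((continuousAt_rpow_const x b (Or.inl hx.ne')).eventually_lt
      continuousAt_const (lt_add_one _))
  have hF : ContinuousAt (fun y => ∫ u in (0:ℝ)..1, (1 - u) ^ a * ψ (y * u)) x := by
    refine intervalIntegral.continuousAt_of_dominated_interval
      (bound := fun u => C * (x ^ b + 1) * ((1 - u) ^ a * u ^ b))
      (Eventually.of_forall fun y => by fun_prop) ?_ ?_ ?_
    · filter_upwards [hnear] with y ⟨hy, hyb⟩
      refine Eventually.of_forall fun u hu => ?_
      rw [uIoc_of_le zero_le_one] at hu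
      have h1u : 0 ≤ (1 - u) ^ a := rpow_nonneg (by linarith [hu.2]) _
      have hψyu : |ψ (y * u)| ≤ C * (x ^ b + 1) * u ^ b :=
        calc |ψ (y * u)| ≤ C * (y ^ b * u ^ b) :=
              (hψb _ (mul_pos hy hu.1)).trans_eq (by rw [mul_rpow hy.le hu.1.le])
          _ ≤ C * ((x ^ b + 1) * u ^ b) :=
              mul_le_mul_of_nonneg_left
                (mul_le_mul_of_nonneg_right hyb.le (rpow_nonneg hu.1.le _)) hC
          _ = C * (x ^ b + 1) * u ^ b := by ring
      calc ‖(1 - u) ^ a * ψ (y * u)‖ = (1 - u) ^ a * |ψ (y * u)| := by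
            rw [norm_mul, norm_of_nonneg h1u, norm_eq_abs]
        _ ≤ (1 - u) ^ a * (C * (x ^ b + 1) * u ^ b) := mul_le_mul_of_nonneg_left hψyu h1u
        _ = C * (x ^ b + 1) * ((1 - u) ^ a * u ^ b) := by ring
    · exact (intervalIntegrable_iff_integrableOn_Ioc_of_le zero_le_one).2
        ((integrableOn_sub_rpow_mul_rpow ha hb one_pos).const_mul _)
    · -- the exceptional set of `u ↦ ψ (x * u)` is a dilate of a null set
      filter_upwards [(Measure.quasiMeasurePreserving_smul volume hx.ne').ae hψc] with u hu _
      have hu' : ContinuousAt ψ (x * u) := hu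
      exact (hu'.comp (f := fun y => y * u) (continuous_mul_const u).continuousAt).const_mul _
  refine ((continuousAt_rpow_const x (a + 1) (Or.inl hx.ne')).mul hF).congr ?_
  filter_upwards [hnear] with y ⟨hy, _⟩
  exact (integral_sub_rpow_mul_eq_rpow_mul ψ a hy).symm


lemma integral_sub_rpow_mul_eq_mul_integral (hψ : Measurable ψ)
    (hψb : ∀ s, 0 < s → |ψ s| ≤ C * s ^ b) (ha : 0 < a) (hb : -1 < b) (hx : 0 < x) :
    ∫ s in 0..x, (x - s) ^ a * ψ s = a * ∫ t in 0..x, ∫ s in 0..t, (t - s) ^ (a - 1) * ψ s := by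
  have ha1 : -1 < a - 1 := by linarith
  rw [intervalIntegral_triangle_swap hx.le (f := fun t s => (t - s) ^ (a - 1) * ψ s)
    (g := fun t => C * betaReal (a - 1) b * t ^ (a - 1 + b + 1)) (by fun_prop)
    (fun t ht => integrableOn_sub_rpow_mul hψ hψb ha1 hb ht.1)
    (fun t ht => integral_abs_sub_rpow_mul_le hψ hψb ha1 hb ht.1)
    ((intervalIntegral.intervalIntegrable_rpow' (by linarith)).1.const_mul _),
    ← intervalIntegral.integral_const_mul]
  refine intervalIntegral.integral_congr fun s _ => ?_
  simp only [intervalIntegral.integral_mul_const, integral_sub_const_rpow ha1, sub_add_cancel]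
  field_simp

lemma hasDerivAt_integral_sub_rpow_mul_s8 (hψ : Measurable ψ)
    (hψb : ∀ s, 0 < s → |ψ s| ≤ C * s ^ b) (hψc : ∀ᵐ s, ContinuousAt ψ s)
    (ha : 0 < a) (hb : -1 < b) (hx : 0 < x) :
    HasDerivAt (fun y => ∫ s in 0..y, (y - s) ^ a * ψ s)
      (a * ∫ s in 0..x, (x - s) ^ (a - 1) * ψ s) x := by
  have ha1 : -1 < a - 1 := by linarith
  set K := fun t => ∫ s in 0..t, (t - s) ^ (a - 1) * ψ s
  have hK : ContinuousOn K (Ioi 0) := fun t ht =>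
    (continuousAt_integral_sub_rpow_mul_s8 hψ hψb hψc ha1 hb ht).continuousWithinAt
  have hKint : IntervalIntegrable K volume 0 x :=
    (intervalIntegrable_iff_integrableOn_Ioc_of_le hx.le).2 <|
      ((intervalIntegral.intervalIntegrable_rpow' (r := a - 1 + b + 1) (by linarith)).1.const_mul
        (C * betaReal (a - 1) b)).mono' ((hK.mono fun _ ht => ht.1).aestronglyMeasurable
        measurableSet_Ioc) ((ae_restrict_iff' measurableSet_Ioc).2 (Eventually.of_forall
        fun t ht => abs_integral_sub_rpow_mul_le_s8 hψ hψb ha1 hb ht.1))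
  have hFTC := intervalIntegral.integral_hasDerivAt_right hKint
    (hK.stronglyMeasurableAtFilter isOpen_Ioi x hx) (hK.continuousAt (Ioi_mem_nhds hx))
  refine (hFTC.const_mul a).congr_of_eventuallyEq ?_
  filter_upwards [lt_mem_nhds hx] with y hy
  exact integral_sub_rpow_mul_eq_mul_integral hψ hψb ha hb hy

lemma integrableOn_of_abs_le_mul_rpow_s8 (hψ : Measurable ψ)
    (hψb : ∀ s, 0 < s → |ψ s| ≤ C * s ^ b) (hb : -1 < b) (x : ℝ) : IntegrableOn ψ (Ioc 0 x) :=
  ((intervalIntegral.intervalIntegrable_rpow' hb).1.const_mul C).mono' hψ.aestronglyMeasurable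
    ((ae_restrict_iff' measurableSet_Ioc).2 (Eventually.of_forall fun s hs => hψb s hs.1))

lemma integral_abs_le_of_abs_le_mul_rpow (hψ : Measurable ψ)
    (hψb : ∀ s, 0 < s → |ψ s| ≤ C * s ^ b) (hb : -1 < b) (hx : 0 ≤ x) :
    ∫ s in Ioc 0 x, |ψ s| ≤ C * x ^ (b + 1) / (b + 1) := by
  calc ∫ s in Ioc 0 x, |ψ s|
      ≤ ∫ s in Ioc 0 x, C * s ^ b :=
        setIntegral_mono_on (integrableOn_of_abs_le_mul_rpow_s8 hψ hψb hb x).abs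
          ((intervalIntegral.intervalIntegrable_rpow' hb).1.const_mul C) measurableSet_Ioc
          fun s hs => hψb s hs.1
    _ = C * x ^ (b + 1) / (b + 1) := by
        rw [integral_const_mul, ← intervalIntegral.integral_of_le hx, integral_rpow (Or.inl hb),
          zero_rpow (by linarith), sub_zero, mul_div_assoc]

lemma integral_abs_sub_rpow_mul_primitive_le (hψ : Measurable ψ)
    (hψb : ∀ s, 0 < s → |ψ s| ≤ C * s ^ b) (hb : -1 < b) {s : ℝ} (hs : s ∈ Ioc 0 x) :
    ∫ τ in Ioc 0 s, |(x - s) ^ a * ψ τ| ≤ C / (b + 1) * ((x - s) ^ a * s ^ (b + 1)) := by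
  have hxs : 0 ≤ (x - s) ^ a := rpow_nonneg (by linarith [hs.2]) _
  simp_rw [abs_mul, abs_of_nonneg hxs]
  rw [integral_const_mul]
  calc (x - s) ^ a * ∫ τ in Ioc 0 s, |ψ τ| ≤ (x - s) ^ a * (C * s ^ (b + 1) / (b + 1)) :=
        mul_le_mul_of_nonneg_left (integral_abs_le_of_abs_le_mul_rpow hψ hψb hb hs.1.le) hxs
    _ = C / (b + 1) * ((x - s) ^ a * s ^ (b + 1)) := by ring

lemma intervalIntegrable_sub_rpow_mul_primitive (hψ : Measurable ψ)
    (hψb : ∀ s, 0 < s → |ψ s| ≤ C * s ^ b) (ha : -1 < a) (hb : -1 < b) (hx : 0 < x) :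
    IntervalIntegrable (fun s => (x - s) ^ a * ∫ τ in 0..s, ψ τ) volume 0 x := by
  have hψx : IntervalIntegrable ψ volume 0 x :=
    (intervalIntegrable_iff_integrableOn_Ioc_of_le hx.le).2
      (integrableOn_of_abs_le_mul_rpow_s8 hψ hψb hb x)
  have hΨ : ContinuousOn (fun s => ∫ τ in 0..s, ψ τ) (Ioc 0 x) :=
    (intervalIntegral.continuousOn_primitive_interval' hψx left_mem_uIcc).mono
      (uIcc_of_le hx.le ▸ Ioc_subset_Icc_self)
  refine (intervalIntegrable_iff_integrableOn_Ioc_of_le hx.le).2 <|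
    ((integrableOn_sub_rpow_mul_rpow (b := b + 1) ha (by linarith) hx).const_mul
      (C / (b + 1))).mono'
      ((by fun_prop : Measurable fun s => (x - s) ^ a).aestronglyMeasurable.mul
        (hΨ.aestronglyMeasurable measurableSet_Ioc))
      ((ae_restrict_iff' measurableSet_Ioc).2 (Eventually.of_forall fun s hs => ?_))
  rw [norm_eq_abs, intervalIntegral.integral_of_le hs.1.le, ← integral_const_mul]
  exact (abs_integral_le_integral_abs).trans (integral_abs_sub_rpow_mul_primitive_le hψ hψb hb hs)

lemma integral_sub_rpow_mul_primitive (hψ : Measurable ψ)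
    (hψb : ∀ s, 0 < s → |ψ s| ≤ C * s ^ b) (ha : -1 < a) (hb : -1 < b) (hx : 0 < x) :
    ∫ s in 0..x, (x - s) ^ a * ∫ τ in 0..s, ψ τ =
      1 / (a + 1) * ∫ τ in 0..x, (x - τ) ^ (a + 1) * ψ τ := by
  have h := intervalIntegral_triangle_swap hx.le (f := fun s τ => (x - s) ^ a * ψ τ)
    (by fun_prop) (fun s _ => (integrableOn_of_abs_le_mul_rpow_s8 hψ hψb hb s).const_mul _)
    (fun s hs => integral_abs_sub_rpow_mul_primitive_le hψ hψb hb hs)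
    ((integrableOn_sub_rpow_mul_rpow (b := b + 1) ha (by linarith) hx).const_mul _)
  simp only [intervalIntegral.integral_const_mul, intervalIntegral.integral_mul_const,
    integral_const_sub_rpow ha] at h
  rw [h, ← intervalIntegral.integral_const_mul]
  refine intervalIntegral.integral_congr fun τ _ => ?_
  ring

end PowerBounded

noncomputable def riemannLiouville (α : ℝ) (ψ : ℝ → ℝ) (x : ℝ) : ℝ :=
  (1 / Gamma α) * ∫ s in (0:ℝ)..x, (x - s) ^ (α - 1) * ψ s

section RiemannLiouville

variable {ψ : ℝ → ℝ} {C b α x : ℝ}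

lemma continuousAt_riemannLiouville (hψ : Measurable ψ) (hψb : ∀ s, 0 < s → |ψ s| ≤ C * s ^ b)
    (hψc : ∀ᵐ s, ContinuousAt ψ s) (hb : -1 < b) (hα : 0 < α) (hx : 0 < x) :
    ContinuousAt (riemannLiouville α ψ) x :=
  continuousAt_const.mul (continuousAt_integral_sub_rpow_mul_s8 hψ hψb hψc (by linarith) hb hx)

lemma hasDerivAt_riemannLiouville (hψ : Measurable ψ) (hψb : ∀ s, 0 < s → |ψ s| ≤ C * s ^ b)
    (hψc : ∀ᵐ s, ContinuousAt ψ s) (hb : -1 < b) (hα : 1 < α) (hx : 0 < x) :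
    HasDerivAt (riemannLiouville α ψ) (riemannLiouville (α - 1) ψ x) x := by
  have h : HasDerivAt (riemannLiouville α ψ) _ x :=
    (hasDerivAt_integral_sub_rpow_mul_s8 hψ hψb hψc (a := α - 1) (by linarith) hb hx).const_mul
      (1 / Gamma α)
  have hα1 : α - 1 ≠ 0 := by linarith
  have hΓ : Gamma α = (α - 1) * Gamma (α - 1) := by rw [← Gamma_add_one hα1, sub_add_cancel]
  have hΓ1 : Gamma (α - 1) ≠ 0 := (Gamma_pos_of_pos (by linarith)).ne'
  convert h using 1
  rw [riemannLiouville, hΓ]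
  field_simp

lemma abs_riemannLiouville_le (hψ : Measurable ψ) (hψb : ∀ s, 0 < s → |ψ s| ≤ C * s ^ b)
    (hb : -1 < b) (hα : 0 < α) (hx : 0 < x) :
    |riemannLiouville α ψ x| ≤ C * betaReal (α - 1) b / Gamma α * x ^ (α + b) := by
  have hΓ : 0 < 1 / Gamma α := one_div_pos.2 (Gamma_pos_of_pos hα)
  rw [riemannLiouville, abs_mul, abs_of_pos hΓ]
  calc 1 / Gamma α * |∫ s in 0..x, (x - s) ^ (α - 1) * ψ s|
      ≤ 1 / Gamma α * (C * betaReal (α - 1) b * x ^ (α - 1 + b + 1)) :=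
        mul_le_mul_of_nonneg_left
          (abs_integral_sub_rpow_mul_le_s8 hψ hψb (by linarith) hb hx) hΓ.le
    _ = C * betaReal (α - 1) b / Gamma α * x ^ (α + b) := by
        rw [show α - 1 + b + 1 = α + b by ring]
        ring

/-- Integration by parts, carried out as a Fubini swap over the triangle `0 < τ ≤ s ≤ x`. -/
lemma riemannLiouville_eq_add (hψ : Measurable ψ) (hψb : ∀ s, 0 < s → |ψ s| ≤ C * s ^ b)
    (hb : -1 < b) {φ : ℝ → ℝ} (hφ : ∀ s ∈ Icc 0 x, φ s = φ 0 + ∫ τ in 0..s, ψ τ)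
    (hα : 0 < α) (hx : 0 < x) :
    riemannLiouville α φ x = φ 0 * x ^ α / Gamma (α + 1) + riemannLiouville (α + 1) ψ x := by
  have hα1 : -1 < α - 1 := by linarith
  have hsplit : ∫ s in 0..x, (x - s) ^ (α - 1) * φ s =
      (∫ s in 0..x, (x - s) ^ (α - 1) * φ 0) +
        ∫ s in 0..x, (x - s) ^ (α - 1) * ∫ τ in 0..s, ψ τ := by
    rw [← intervalIntegral.integral_add ((intervalIntegrable_const_sub_rpow hα1 x).mul_const (φ 0))
      (intervalIntegrable_sub_rpow_mul_primitive hψ hψb hα1 hb hx)]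
    refine intervalIntegral.integral_congr fun s hs => ?_
    rw [uIcc_of_le hx.le] at hs
    rw [hφ s hs]
    ring
  have hΓ : Gamma α ≠ 0 := (Gamma_pos_of_pos hα).ne'
  rw [riemannLiouville, riemannLiouville, hsplit, integral_sub_rpow_mul_primitive hψ hψb hα1 hb hx]
  simp only [intervalIntegral.integral_mul_const, integral_const_sub_rpow hα1]
  rw [Gamma_add_one hα.ne', sub_add_cancel, sub_zero, add_sub_cancel_right]
  field_simp

end RiemannLiouville

lemma hasDerivAt_rpow_div_Gamma {β x : ℝ} (hβ : 0 < β) (hx : 0 < x) :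
    HasDerivAt (fun y => y ^ β / Gamma (β + 1)) (x ^ (β - 1) / Gamma β) x := by
  have hΓ : Gamma β ≠ 0 := (Gamma_pos_of_pos hβ).ne'
  refine ((hasDerivAt_rpow_const (p := β) (Or.inl hx.ne')).div_const (Gamma (β + 1))).congr_deriv ?_
  rw [Gamma_add_one hβ.ne']
  field_simp

/-- On `(0, 1]`, the `k`-th derivative of `r` is `rlProfile p⁽ᵏ⁾ (φ 0) (σ - k) φ'`. -/
noncomputable def rlProfile (q : Polynomial ℝ) (c β : ℝ) (ψ : ℝ → ℝ) (x : ℝ) : ℝ :=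
  q.eval x + c * (x ^ β / Gamma (β + 1)) + riemannLiouville (β + 1) ψ x

section RLProfile

variable {ψ : ℝ → ℝ} {C b β c x : ℝ}

lemma hasDerivAt_rlProfile (hψ : Measurable ψ) (hψb : ∀ s, 0 < s → |ψ s| ≤ C * s ^ b)
    (hψc : ∀ᵐ s, ContinuousAt ψ s) (hb : -1 < b) (q : Polynomial ℝ) (hβ : 0 < β) (hx : 0 < x) :
    HasDerivAt (rlProfile q c β ψ) (rlProfile (Polynomial.derivative q) c (β - 1) ψ x) x := by
  have h := ((q.hasDerivAt x).add ((hasDerivAt_rpow_div_Gamma hβ hx).const_mul c)).add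
    (hasDerivAt_riemannLiouville hψ hψb hψc hb (α := β + 1) (by linarith) hx)
  rw [add_sub_cancel_right] at h
  rw [rlProfile, sub_add_cancel]
  exact h

lemma hasDerivAt_rlProfile_iterate (hψ : Measurable ψ) (hψb : ∀ s, 0 < s → |ψ s| ≤ C * s ^ b)
    (hψc : ∀ᵐ s, ContinuousAt ψ s) (hb : -1 < b) (q : Polynomial ℝ) {k : ℕ} (hk : (k:ℝ) < β)
    (hx : 0 < x) :
    HasDerivAt (rlProfile (Polynomial.derivative^[k] q) c (β - k) ψ)
      (rlProfile (Polynomial.derivative^[k + 1] q) c (β - (k + 1 : ℕ)) ψ x) x := by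
  rw [Function.iterate_succ_apply', Nat.cast_succ, ← sub_sub]
  exact hasDerivAt_rlProfile hψ hψb hψc hb _ (by linarith) hx

lemma rlProfile_zero_apply (c β : ℝ) (ψ : ℝ → ℝ) (x : ℝ) :
    rlProfile 0 c β ψ x = c / Gamma (β + 1) * x ^ β +
      1 / Gamma (β + 1) * ∫ s in (0:ℝ)..x, (x - s) ^ β * ψ s := by
  rw [rlProfile, riemannLiouville, Polynomial.eval_zero, zero_add, add_sub_cancel_right]
  ring

lemma continuousOn_rlProfile (hψ : Measurable ψ) (hψb : ∀ s, 0 < s → |ψ s| ≤ C * s ^ b)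
    (hψc : ∀ᵐ s, ContinuousAt ψ s) (hb : -1 < b) (q : Polynomial ℝ) (hβ : -1 < β) :
    ContinuousOn (rlProfile q c β ψ) (Ioi 0) := fun x hx =>
  ((q.continuous.continuousAt.add
    (((continuousAt_rpow_const x β (Or.inl (ne_of_gt hx))).div_const _).const_mul c)).add
    (continuousAt_riemannLiouville hψ hψb hψc hb (α := β + 1) (by linarith) hx)).continuousWithinAt

lemma exists_abs_rlProfile_zero_le (hψ : Measurable ψ) (hψb : ∀ s, 0 < s → |ψ s| ≤ C * s ^ b)
    (hb : -1 < b) (c : ℝ) :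
    ∃ K, ∀ x ∈ Ioc (0:ℝ) 1, |rlProfile 0 c b ψ x| ≤ K * x ^ b := by
  have hΓ : 0 < Gamma (b + 1) := Gamma_pos_of_pos (by linarith)
  refine ⟨|c| / Gamma (b + 1) + C * betaReal b b / Gamma (b + 1), fun x hx => ?_⟩
  have hxb : 0 < x ^ b := rpow_pos_of_pos hx.1 _
  have hpow : x ^ (b + 1 + b) ≤ x ^ b := by
    rw [rpow_add hx.1]
    exact mul_le_of_le_one_left hxb.le (rpow_le_one hx.1.le hx.2 (by linarith))
  have hRL := abs_riemannLiouville_le hψ hψb hb (α := b + 1) (by linarith) hx.1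
  rw [add_sub_cancel_right] at hRL
  have hC : 0 ≤ C * betaReal b b / Gamma (b + 1) := by
    have := (abs_nonneg _).trans hRL
    exact nonneg_of_mul_nonneg_left this (rpow_pos_of_pos hx.1 _)
  rw [rlProfile, Polynomial.eval_zero, zero_add]
  calc |c * (x ^ b / Gamma (b + 1)) + riemannLiouville (b + 1) ψ x|
      ≤ |c| * (x ^ b / Gamma (b + 1)) + C * betaReal b b / Gamma (b + 1) * x ^ b := by
        refine (abs_add_le _ _).trans (add_le_add ?_ (hRL.trans ?_))
        · rw [abs_mul, abs_div, abs_of_pos hxb, abs_of_pos hΓ]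
        · exact mul_le_mul_of_nonneg_left hpow hC
    _ = (|c| / Gamma (b + 1) + C * betaReal b b / Gamma (b + 1)) * x ^ b := by ring

end RLProfile

lemma iteratedDerivWithin_eqOn_of_hasDerivAt {f : ℝ → ℝ} {G : ℕ → ℝ → ℝ} {s t : Set ℝ} {n : ℕ}
    (hs : UniqueDiffOn ℝ s) (hts : t ⊆ s) (ht : ∀ x ∈ t, t ∈ 𝓝[s] x) (hf : EqOn f (G 0) t)
    (hG : ∀ k < n, ∀ x ∈ t, HasDerivAt (G k) (G (k + 1) x) x) :
    EqOn (iteratedDerivWithin n f s) (G n) t := by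
  induction n with
  | zero => simpa using hf
  | succ n ih =>
    intro x hx
    have ih := ih fun k hk => hG k (by omega)
    rw [iteratedDerivWithin_succ, Filter.EventuallyEq.derivWithin_eq
      (Filter.mem_of_superset (ht x hx) fun y hy => ih hy) (ih hx)]
    exact (hG n (by omega) x hx).hasDerivWithinAt.derivWithin (hs x (hts hx))

lemma contDiffOn_of_hasDerivAt {G : ℕ → ℝ → ℝ} {t : Set ℝ} {n : ℕ} (ht : UniqueDiffOn ℝ t)
    (hG : ∀ k < n, ∀ x ∈ t, HasDerivAt (G k) (G (k + 1) x) x) (hGn : ContinuousOn (G n) t) :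
    ContDiffOn ℝ n (G 0) t := by
  induction n generalizing G with
  | zero => exact contDiffOn_zero.2 hGn
  | succ n ih =>
    rw [Nat.cast_succ, contDiffOn_succ_iff_derivWithin ht]
    refine ⟨fun x hx => (hG 0 n.succ_pos x hx).differentiableAt.differentiableWithinAt,
      by simp, ?_⟩
    refine (ih (G := fun k => G (k + 1)) (fun k hk => hG (k + 1) (by omega)) hGn).congr
      fun x hx => ?_
    exact (hG 0 n.succ_pos x hx).hasDerivWithinAt.derivWithin (ht x hx)

lemma ContinuousOn.measurable_indicator {g : ℝ → ℝ} {s : Set ℝ} (hg : ContinuousOn g s)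
    (hs : MeasurableSet s) : Measurable (s.indicator g) := by
  classical
  rw [← piecewise_eq_indicator]
  exact hg.measurable_piecewise continuousOn_const hs

lemma ae_continuousAt_indicator_Ioc {g : ℝ → ℝ} {a b : ℝ} (hab : a < b)
    (hg : ContinuousOn g (Ioc a b)) : ∀ᵐ x, ContinuousAt ((Ioc a b).indicator g) x := by
  have hfr : ∀ᵐ x, x ∉ frontier (Ioc a b) := by
    rw [frontier_Ioc hab]
    exact (toFinite _).countable.ae_notMem _
  filter_upwards [hfr] with x hx
  exact (hg.mono interior_subset).continuousAt_indicator hx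

lemma abs_indicator_Ioc_le_mul_rpow {g : ℝ → ℝ} {a C b : ℝ} (ha : 0 < a)
    (hg : ∀ s ∈ Ioc 0 a, |g s| ≤ C * s ^ b) (s : ℝ) (hs : 0 < s) :
    |(Ioc 0 a).indicator g s| ≤ C * s ^ b := by
  by_cases h : s ∈ Ioc 0 a
  · rw [indicator_of_mem h]
    exact hg s h
  · have hC : 0 ≤ C * a ^ b := (abs_nonneg _).trans (hg a ⟨ha, le_rfl⟩)
    rw [indicator_of_notMem h, abs_zero]
    exact mul_nonneg (nonneg_of_mul_nonneg_left hC (rpow_pos_of_pos ha _)) (rpow_nonneg hs.le _)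

lemma continuousOn_derivWithin_Icc {φ : ℝ → ℝ} {a b : ℝ} (hφ : ContDiffOn ℝ 1 φ (Ioc a b)) :
    ContinuousOn (derivWithin φ (Icc a b)) (Ioc a b) := by
  refine (hφ.continuousOn_derivWithin (uniqueDiffOn_Ioc a b) le_rfl).congr fun s hs => ?_
  refine derivWithin_congr_set (eventuallyEq_set.2 ?_)
  filter_upwards [Ioi_mem_nhds hs.1] with y hy
  exact ⟨fun h => ⟨hy, h.2⟩, fun h => ⟨h.1.le, h.2⟩⟩

lemma eq_add_integral_indicator_derivWithin {φ : ℝ → ℝ} {a b s : ℝ}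
    (hφc : ContinuousOn φ (Icc a b)) (hφd : DifferentiableOn ℝ φ (Ioo a b))
    (hint : IntegrableOn ((Ioc a b).indicator (derivWithin φ (Icc a b))) (Ioc a b))
    (hs : s ∈ Icc a b) :
    φ s = φ a + ∫ t in a..s, (Ioc a b).indicator (derivWithin φ (Icc a b)) t := by
  have hderiv : ∀ t ∈ Ioo a s,
      HasDerivAt φ ((Ioc a b).indicator (derivWithin φ (Icc a b)) t) t := fun t ht => by
    have htab : t ∈ Ioo a b := ⟨ht.1, ht.2.trans_le hs.2⟩
    rw [indicator_of_mem (Ioo_subset_Ioc_self htab),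
      derivWithin_of_mem_nhds (Icc_mem_nhds htab.1 htab.2)]
    exact (hφd.differentiableAt (Ioo_mem_nhds htab.1 htab.2)).hasDerivAt
  have := intervalIntegral.integral_eq_sub_of_hasDerivAt_of_le hs.1
    (hφc.mono (Icc_subset_Icc_right hs.2)) hderiv
    ((intervalIntegrable_iff_integrableOn_Ioc_of_le hs.1).2
      (hint.mono_set (Ioc_subset_Ioc_right hs.2)))
  linarith

lemma integral_mul_indicator_Ioc (f g : ℝ → ℝ) {a x : ℝ} (hx : x ∈ Ioc 0 a) :
    ∫ s in (0:ℝ)..x, f s * (Ioc 0 a).indicator g s = ∫ s in (0:ℝ)..x, f s * g s := by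
  refine intervalIntegral.integral_congr_ae (Eventually.of_forall fun s hs => ?_)
  rw [uIoc_of_le hx.1.le] at hs
  rw [indicator_of_mem (show s ∈ Ioc 0 a from ⟨hs.1, hs.2.trans hx.2⟩)]

lemma rfun_eq_rlProfile {σ x C b : ℝ} {p : Polynomial ℝ} {φ ψ : ℝ → ℝ} (hψ : Measurable ψ)
    (hψb : ∀ s, 0 < s → |ψ s| ≤ C * s ^ b) (hb : -1 < b)
    (hφ : ∀ s ∈ Icc 0 x, φ s = φ 0 + ∫ τ in 0..s, ψ τ) (hσ : 0 < σ) (hx : 0 < x) :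
    rfun σ p φ x = rlProfile p (φ 0) σ ψ x := by
  change p.eval x + riemannLiouville σ φ x = _
  rw [riemannLiouville_eq_add hψ hψb hb hφ hσ hx, rlProfile]
  ring

lemma contDiffOn_rfun_and_iteratedDerivWithin_eqOn {σ C b : ℝ} {m : ℕ} {p : Polynomial ℝ}
    {φ ψ : ℝ → ℝ} (hψ : Measurable ψ) (hψb : ∀ s, 0 < s → |ψ s| ≤ C * s ^ b)
    (hψc : ∀ᵐ s, ContinuousAt ψ s) (hb : -1 < b)
    (hφ : ∀ s ∈ Icc 0 1, φ s = φ 0 + ∫ τ in 0..s, ψ τ) (hσm : (m:ℝ) - 1 < σ) (hσ : 0 < σ) :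
    ContDiffOn ℝ m (rfun σ p φ) (Ioc 0 1) ∧
      EqOn (iteratedDerivWithin m (rfun σ p φ) (Icc 0 1))
        (rlProfile (Polynomial.derivative^[m] p) (φ 0) (σ - m) ψ) (Ioc 0 1) := by
  set G : ℕ → ℝ → ℝ := fun k => rlProfile (Polynomial.derivative^[k] p) (φ 0) (σ - k) ψ
  have hrG : EqOn (rfun σ p φ) (G 0) (Ioc 0 1) := fun x hx => by
    simpa only [G, Function.iterate_zero, id_eq, Nat.cast_zero, sub_zero] using
      rfun_eq_rlProfile hψ hψb hb (fun s hs => hφ s ⟨hs.1, hs.2.trans hx.2⟩) hσ hx.1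
  have hG : ∀ k < m, ∀ x ∈ Ioc (0:ℝ) 1, HasDerivAt (G k) (G (k + 1) x) x := fun k hk x hx =>
    hasDerivAt_rlProfile_iterate hψ hψb hψc hb p
      (by linarith [(show (k:ℝ) + 1 ≤ m by exact_mod_cast hk)]) hx.1
  have hGm : ContinuousOn (G m) (Ioc 0 1) :=
    (continuousOn_rlProfile hψ hψb hψc hb _ (by linarith)).mono fun x hx => hx.1
  exact ⟨(contDiffOn_of_hasDerivAt (uniqueDiffOn_Ioc 0 1) hG hGm).congr hrG,
    iteratedDerivWithin_eqOn_of_hasDerivAt (uniqueDiffOn_Icc zero_lt_one) Ioc_subset_Icc_self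
      (fun x hx => mem_of_superset (inter_mem_nhdsWithin _ (Ioi_mem_nhds hx.1))
        fun y hy => ⟨hy.2, hy.1.2⟩) hrG hG⟩

theorem stmt8_general (m : ℕ) (hm : 0 < m) (σ : ℝ) (hσ1 : (m:ℝ) - 1 < σ)
    (p : Polynomial ℝ) (hp : p.degree ≤ (m - 1 : ℕ))
    (φ : ℝ → ℝ) (hφc : ContinuousOn φ (Set.Icc 0 1))
    (hφ1 : ContDiffOn ℝ 1 φ (Set.Ioc 0 1))
    (C₀ : ℝ)
    (hφb : ∀ s ∈ Set.Ioc (0:ℝ) 1,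
      |derivWithin φ (Set.Icc 0 1) s| ≤ C₀ * s ^ (σ - m)) :
    ContDiffOn ℝ m (rfun σ p φ) (Set.Ioc 0 1) ∧
    (∀ x ∈ Set.Ioc (0:ℝ) 1,
      iteratedDerivWithin m (rfun σ p φ) (Set.Icc 0 1) x
        = (φ 0 / Real.Gamma (σ - m + 1)) * x ^ (σ - m)
          + (1 / Real.Gamma (σ - m + 1)) *
              ∫ s in (0:ℝ)..x, (x - s) ^ (σ - m) * derivWithin φ (Set.Icc 0 1) s) ∧
    ∃ C : ℝ, ∀ x ∈ Set.Ioc (0:ℝ) 1,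
      |iteratedDerivWithin m (rfun σ p φ) (Set.Icc 0 1) x| ≤ C * x ^ (σ - m) := by
  -- `derivWithin φ (Icc 0 1)` is uncontrolled at `0`; cut off to `(0, 1]` it becomes measurable
  -- and continuous outside `{0, 1}`
  set ψ := (Ioc (0:ℝ) 1).indicator (derivWithin φ (Icc 0 1))
  have hm1 : (1:ℝ) ≤ m := by exact_mod_cast hm
  have hb : -1 < σ - m := by linarith
  have hφ' := continuousOn_derivWithin_Icc hφ1
  have hψ : Measurable ψ := hφ'.measurable_indicator measurableSet_Ioc
  have hψb := abs_indicator_Ioc_le_mul_rpow one_pos hφb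
  have hψc : ∀ᵐ s, ContinuousAt ψ s := ae_continuousAt_indicator_Ioc one_pos hφ'
  have hFTC : ∀ s ∈ Icc (0:ℝ) 1, φ s = φ 0 + ∫ τ in 0..s, ψ τ := fun s hs =>
    eq_add_integral_indicator_derivWithin hφc
      ((hφ1.differentiableOn one_ne_zero).mono Ioo_subset_Ioc_self)
      (integrableOn_of_abs_le_mul_rpow_s8 hψ hψb hb 1) hs
  obtain ⟨hcd, hiter⟩ := contDiffOn_rfun_and_iteratedDerivWithin_eqOn (p := p) hψ hψb hψc hb hFTC
    hσ1 (by linarith)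
  rw [Polynomial.iterate_derivative_eq_zero_of_degree_lt
    (hp.trans_lt (by exact_mod_cast Nat.sub_lt hm one_pos))] at hiter
  obtain ⟨K, hK⟩ := exists_abs_rlProfile_zero_le hψ hψb hb (φ 0)
  refine ⟨hcd, fun x hx => ?_, K, fun x hx => hiter hx ▸ hK x hx⟩
  rw [hiter hx, rlProfile_zero_apply, integral_mul_indicator_Ioc _ _ hx]

theorem stmt8 (m : ℕ) (hm : 0 < m) (σ : ℝ) (hσ1 : (m:ℝ) - 1 < σ) (hσ2 : σ < m)
    (p : Polynomial ℝ) (hp : p.degree ≤ (m - 1 : ℕ))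
    (φ : ℝ → ℝ) (hφc : ContinuousOn φ (Set.Icc 0 1))
    (hφ1 : ContDiffOn ℝ 1 φ (Set.Ioc 0 1))
    (C₀ : ℝ)
    (hφb : ∀ s ∈ Set.Ioc (0:ℝ) 1,
      |derivWithin φ (Set.Icc 0 1) s| ≤ C₀ * s ^ (σ - m)) :
    ContDiffOn ℝ m (rfun σ p φ) (Set.Ioc 0 1) ∧
    (∀ x ∈ Set.Ioc (0:ℝ) 1,
      iteratedDerivWithin m (rfun σ p φ) (Set.Icc 0 1) x
        = (φ 0 / Real.Gamma (σ - m + 1)) * x ^ (σ - m)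
          + (1 / Real.Gamma (σ - m + 1)) *
              ∫ s in (0:ℝ)..x, (x - s) ^ (σ - m) * derivWithin φ (Set.Icc 0 1) s) ∧
    ∃ C : ℝ, ∀ x ∈ Set.Ioc (0:ℝ) 1,
      |iteratedDerivWithin m (rfun σ p φ) (Set.Icc 0 1) x| ≤ C * x ^ (σ - m) :=
  stmt8_general m hm σ hσ1 p hp φ hφc hφ1 C₀ hφb
end

section
/- Let δ ∈ ℝ with 1 < δ < 2. Then for every integer j ≥ 3, 2 j^{2−δ} − 3 (j−1)^{2−δ} + (j−2)^{2−δ} > 0. Equivalently, with d_r := r^{2−δ} − (r−1)^{2−δ} for integers r ≥ 1, one has −d_{j−1} + 2 d_j > 0 for all j ≥ 3. -/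
/-!
Weighted AM-GM with weights `2/3, 1/3` gives
`2 x^α + (x-2)^α ≥ 3 (x² (x-2))^(α/3)`, and `x² (x-2) - (x-1)³ = x² - 3x + 1 > 0` for `x ≥ 3`,
so the right-hand side exceeds `3 (x-1)^α` as soon as `α > 0`.
-/

open Real

theorem sub_one_pow_three_lt_sq_mul_sub_two {x : ℝ} (hx : 3 ≤ x) :
    (x - 1) ^ 3 < x ^ 2 * (x - 2) := by
  nlinarith

theorem three_mul_rpow_sub_one_lt {α x : ℝ} (hα : 0 < α) (hx : 3 ≤ x) :
    3 * (x - 1) ^ α < 2 * x ^ α + (x - 2) ^ α := by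
  have hx1 : 0 ≤ x - 1 := by linarith
  have hx2 : 0 ≤ x - 2 := by linarith
  have hmono : (x - 1) ^ α < (x ^ 2 * (x - 2)) ^ (α / 3) :=
    calc (x - 1) ^ α = ((x - 1) ^ 3) ^ (α / 3) := by
          rw [← rpow_natCast_mul hx1]; ring_nf
      _ < (x ^ 2 * (x - 2)) ^ (α / 3) :=
          rpow_lt_rpow (by positivity) (sub_one_pow_three_lt_sq_mul_sub_two hx) (by positivity)
  have hsplit : (x ^ 2 * (x - 2)) ^ (α / 3) = (x ^ α) ^ (2 / 3 : ℝ) * ((x - 2) ^ α) ^ (1 / 3 : ℝ) := by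
    rw [mul_rpow (by positivity) hx2, ← rpow_natCast_mul (by linarith), ← rpow_mul (by linarith),
      ← rpow_mul hx2]
    ring_nf
  have hamgm := geom_mean_le_arith_mean2_weighted (w₁ := 2 / 3) (w₂ := 1 / 3) (by norm_num)
    (by norm_num) (rpow_nonneg (by linarith : (0 : ℝ) ≤ x) α) (rpow_nonneg hx2 α) (by norm_num)
  linarith

theorem stmt12_general (δ : ℝ) (hδ2 : δ < 2) :
    ∀ j : ℕ, 3 ≤ j →
      0 < 2 * (j:ℝ) ^ (2 - δ) - 3 * ((j:ℝ) - 1) ^ (2 - δ) + ((j:ℝ) - 2) ^ (2 - δ) := by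
  intro j hj
  have := three_mul_rpow_sub_one_lt (x := j) (by linarith : 0 < 2 - δ) (by exact_mod_cast hj)
  linarith

theorem stmt12 (δ : ℝ) (hδ1 : 1 < δ) (hδ2 : δ < 2) :
    ∀ j : ℕ, 3 ≤ j →
      0 < 2 * (j:ℝ) ^ (2 - δ) - 3 * ((j:ℝ) - 1) ^ (2 - δ) + ((j:ℝ) - 2) ^ (2 - δ) :=
  stmt12_general δ hδ2
end

section
/- Let δ ∈ ℝ with 1 < δ < 2. Then there exists a constant C, depending only on δ and independent of j, such that for every integer j ≥ 2, Σ_{k=1}^{j−1} [ (j−k)^{2−δ} − (j−k−1)^{2−δ} ] · k^{δ−3} ≤ C j^{1−δ}. -/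
/-!
Split the sum at `k = j / 2`. For `2k ≤ j` the increment `(j-k)^(2-δ) - (j-k-1)^(2-δ)` is
at most `(j-k)^(1-δ) ≤ 2^(δ-1) j^(1-δ)`, and `∑ k^(δ-3)` converges because `δ < 2`.
For `2k > j` we have `k^(δ-3) ≤ 2^(3-δ) j^(δ-3)`, while the increments are nonnegative and
telescope to at most `j^(2-δ)`; this leaves `2^(3-δ) j⁻¹ ≤ 2^(3-δ) j^(1-δ)`.
-/

open Finset

lemma rpow_sub_rpow_sub_one_le {α x : ℝ} (hα : α ≤ 1) (hx : 1 ≤ x) :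
    x ^ α - (x - 1) ^ α ≤ x ^ (α - 1) := by
  have hx0 : 0 < x := by linarith
  set t := (x - 1) / x
  have ht : t ≤ t ^ α :=
    Real.self_le_rpow_of_le_one (div_nonneg (by linarith) hx0.le)
      (div_le_one_of_le₀ (by linarith) hx0.le) hα
  have hsplit : (x - 1) ^ α = t ^ α * x ^ α := by
    rw [← Real.mul_rpow (div_nonneg (by linarith) hx0.le) hx0.le, div_mul_cancel₀ _ hx0.ne']
  calc x ^ α - (x - 1) ^ α = x ^ α * (1 - t ^ α) := by rw [hsplit]; ring
    _ ≤ x ^ α * (1 - t) := by gcongr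
    _ = x ^ (α - 1) := by
      rw [Real.rpow_sub_one hx0.ne']; simp only [t]; field_simp; ring

lemma div_two_rpow {x : ℝ} (hx : 0 ≤ x) (y : ℝ) : (x / 2) ^ y = 2 ^ (-y) * x ^ y := by
  rw [Real.div_rpow hx zero_le_two, Real.rpow_neg zero_le_two, div_eq_inv_mul]

lemma sum_Icc_sub_telescope (f : ℝ → ℝ) (x : ℝ) (n : ℕ) :
    ∑ k ∈ Icc 1 n, (f (x - k) - f (x - k - 1)) = f (x - 1) - f (x - 1 - n) := by
  induction n with
  | zero => simp
  | succ n ih =>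
    rw [sum_Icc_succ_top (Nat.le_add_left 1 n), ih]
    push_cast
    ring_nf

section

variable {δ : ℝ} {j : ℕ}

lemma sum_head_le (hδ1 : 1 ≤ δ) (hδ2 : δ < 2) :
    ∑ k ∈ Icc 1 (j - 1) with 2 * k ≤ j,
        (((j : ℝ) - k) ^ (2 - δ) - ((j : ℝ) - k - 1) ^ (2 - δ)) * (k : ℝ) ^ (δ - 3)
      ≤ 2 ^ (δ - 1) * (∑' k : ℕ, (k : ℝ) ^ (δ - 3)) * (j : ℝ) ^ (1 - δ) := by
  have hterm : ∀ k ∈ Icc 1 (j - 1), 2 * k ≤ j →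
      (((j : ℝ) - k) ^ (2 - δ) - ((j : ℝ) - k - 1) ^ (2 - δ)) * (k : ℝ) ^ (δ - 3)
        ≤ 2 ^ (δ - 1) * (j : ℝ) ^ (1 - δ) * (k : ℝ) ^ (δ - 3) := by
    intro k hk h2k
    rw [mem_Icc] at hk
    have hkj : (k : ℝ) + 1 ≤ j := by exact_mod_cast (by omega : k + 1 ≤ j)
    have h2kj : 2 * (k : ℝ) ≤ j := by exact_mod_cast h2k
    have hk1 : (1 : ℝ) ≤ k := by exact_mod_cast hk.1
    have hinc := rpow_sub_rpow_sub_one_le (α := 2 - δ) (x := (j : ℝ) - k) (by linarith)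
      (by linarith)
    rw [show 2 - δ - 1 = 1 - δ by ring] at hinc
    have hfar : ((j : ℝ) - k) ^ (1 - δ) ≤ 2 ^ (δ - 1) * (j : ℝ) ^ (1 - δ) := by
      calc ((j : ℝ) - k) ^ (1 - δ) ≤ ((j : ℝ) / 2) ^ (1 - δ) :=
            Real.rpow_le_rpow_of_nonpos (by linarith) (by linarith) (by linarith)
        _ = 2 ^ (δ - 1) * (j : ℝ) ^ (1 - δ) := by
            rw [div_two_rpow (Nat.cast_nonneg j), neg_sub]
    gcongr
    exact hinc.trans hfar
  have hsummable : Summable fun k : ℕ ↦ (k : ℝ) ^ (δ - 3) :=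
    Real.summable_nat_rpow.mpr (by linarith)
  calc _ ≤ ∑ k ∈ Icc 1 (j - 1) with 2 * k ≤ j,
          2 ^ (δ - 1) * (j : ℝ) ^ (1 - δ) * (k : ℝ) ^ (δ - 3) :=
        sum_le_sum fun k hk ↦ hterm k (mem_filter.1 hk).1 (mem_filter.1 hk).2
    _ = 2 ^ (δ - 1) * (j : ℝ) ^ (1 - δ) *
          ∑ k ∈ Icc 1 (j - 1) with 2 * k ≤ j, (k : ℝ) ^ (δ - 3) :=
        (mul_sum ..).symm
    _ ≤ 2 ^ (δ - 1) * (j : ℝ) ^ (1 - δ) * ∑' k : ℕ, (k : ℝ) ^ (δ - 3) := by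
        gcongr
        exact hsummable.sum_le_tsum _ fun k _ ↦ by positivity
    _ = _ := by ring

lemma sum_tail_le (hδ2 : δ ≤ 2) (hj : 0 < j) :
    ∑ k ∈ Icc 1 (j - 1) with ¬2 * k ≤ j,
        (((j : ℝ) - k) ^ (2 - δ) - ((j : ℝ) - k - 1) ^ (2 - δ)) * (k : ℝ) ^ (δ - 3)
      ≤ 2 ^ (3 - δ) * (j : ℝ) ^ (1 - δ) := by
  have hj1 : (1 : ℝ) ≤ j := by exact_mod_cast hj
  have hinc_nonneg : ∀ k ∈ Icc 1 (j - 1),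
      0 ≤ ((j : ℝ) - k) ^ (2 - δ) - ((j : ℝ) - k - 1) ^ (2 - δ) := by
    intro k hk
    have hkj : (k : ℝ) + 1 ≤ j := by
      exact_mod_cast (by simp only [mem_Icc] at hk; omega : k + 1 ≤ j)
    exact sub_nonneg.mpr (Real.rpow_le_rpow (by linarith) (by linarith) (by linarith))
  have hterm : ∀ k ∈ Icc 1 (j - 1), ¬2 * k ≤ j →
      (((j : ℝ) - k) ^ (2 - δ) - ((j : ℝ) - k - 1) ^ (2 - δ)) * (k : ℝ) ^ (δ - 3)
        ≤ (((j : ℝ) - k) ^ (2 - δ) - ((j : ℝ) - k - 1) ^ (2 - δ)) *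
            (2 ^ (3 - δ) * (j : ℝ) ^ (δ - 3)) := by
    intro k hk h2k
    have h2kj : (j : ℝ) ≤ 2 * k := by exact_mod_cast (by omega : j ≤ 2 * k)
    gcongr
    · exact hinc_nonneg k hk
    calc (k : ℝ) ^ (δ - 3) ≤ ((j : ℝ) / 2) ^ (δ - 3) :=
          Real.rpow_le_rpow_of_nonpos (by linarith) (by linarith) (by linarith)
      _ = 2 ^ (3 - δ) * (j : ℝ) ^ (δ - 3) := by
          rw [div_two_rpow (Nat.cast_nonneg j), neg_sub]
  have htelescope :
      ∑ k ∈ Icc 1 (j - 1), (((j : ℝ) - k) ^ (2 - δ) - ((j : ℝ) - k - 1) ^ (2 - δ))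
        ≤ (j : ℝ) ^ (2 - δ) := by
    rw [sum_Icc_sub_telescope (· ^ (2 - δ)), Nat.cast_sub hj, Nat.cast_one, sub_self]
    have : ((j : ℝ) - 1) ^ (2 - δ) ≤ (j : ℝ) ^ (2 - δ) :=
      Real.rpow_le_rpow (by linarith) (by linarith) (by linarith)
    linarith [Real.rpow_nonneg (le_refl (0 : ℝ)) (2 - δ)]
  calc _ ≤ ∑ k ∈ Icc 1 (j - 1) with ¬2 * k ≤ j,
          (((j : ℝ) - k) ^ (2 - δ) - ((j : ℝ) - k - 1) ^ (2 - δ)) *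
            (2 ^ (3 - δ) * (j : ℝ) ^ (δ - 3)) :=
        sum_le_sum fun k hk ↦ hterm k (mem_filter.1 hk).1 (mem_filter.1 hk).2
    _ ≤ ∑ k ∈ Icc 1 (j - 1),
          (((j : ℝ) - k) ^ (2 - δ) - ((j : ℝ) - k - 1) ^ (2 - δ)) *
            (2 ^ (3 - δ) * (j : ℝ) ^ (δ - 3)) :=
        sum_le_sum_of_subset_of_nonneg (filter_subset _ _) fun k hk _ ↦
          mul_nonneg (hinc_nonneg k hk) (by positivity)
    _ ≤ (j : ℝ) ^ (2 - δ) * (2 ^ (3 - δ) * (j : ℝ) ^ (δ - 3)) := by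
        rw [← sum_mul]; gcongr
    _ = 2 ^ (3 - δ) * (j : ℝ) ^ (-1 : ℝ) := by
        rw [mul_left_comm, ← Real.rpow_add (by linarith)]; norm_num
    _ ≤ 2 ^ (3 - δ) * (j : ℝ) ^ (1 - δ) := by
        gcongr
        linarith

end

theorem stmt16 (δ : ℝ) (hδ1 : 1 < δ) (hδ2 : δ < 2) :
    ∃ C : ℝ, ∀ j : ℕ, 2 ≤ j →
      ∑ k ∈ Finset.Icc 1 (j - 1),
          (((j:ℝ) - (k:ℕ)) ^ (2 - δ) - ((j:ℝ) - (k:ℕ) - 1) ^ (2 - δ)) * ((k:ℕ):ℝ) ^ (δ - 3)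
        ≤ C * (j:ℝ) ^ (1 - δ) := by
  refine ⟨2 ^ (δ - 1) * (∑' k : ℕ, (k : ℝ) ^ (δ - 3)) + 2 ^ (3 - δ), fun j hj ↦ ?_⟩
  rw [← sum_filter_add_sum_filter_not _ (fun k ↦ 2 * k ≤ j), add_mul]
  exact add_le_add (sum_head_le hδ1.le hδ2) (sum_tail_le hδ2.le (by omega))
end
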